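/- arXiv:math/0006177 — 4 statements merged into one kernel-verified Lean document; each statement's English description precedes it below -/
import Mathlib

section
/- Fix the standard path system assigning to each v ∈ ℤ^d the staircase path τ_v from 0 to v that goes v₁ steps along axis 1, then v₂ steps along axis 2, …, then v_d steps along axis d, and let β = β_τ be its associated 2-cocycle. Define on the set ℤ^d × B_d the multiplication (v,f)·(w,g) = (v+w, f + v·g + β(v,w)). Then this multiplication makes ℤ^d × B_d a group, and there is a group isomorphism Ψ : Sol_d → ℤ^d × B_d such that Ψ(image of x_i) = (e_i, 0) for every i = 1,…,d; moreover Ψ maps the derived subgroup of Sol_d onto {0} × B_d, and sends the image of the commutator [x_i, x_j] to (0, the elementary (i,j)-placket at 0). -/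
open scoped BigOperators
open scoped commutatorElement

/-- Lattice points of `ℤ^d`. -/
abbrev Pt (d : ℕ) : Type := Fin d → ℤ

/-- Oriented edges of the grid: `(v, i)` is the edge from `v` to `v + eᵢ`. -/
abbrev Edg (d : ℕ) : Type := (Fin d → ℤ) × Fin d

/-- The `i`-th standard basis vector of `ℤ^d`. -/
def latE (d : ℕ) (i : Fin d) : Pt d := fun j => if j = i then 1 else 0

/-- Zero-divergence condition defining `1`-cycles on the grid. -/
def IsCycle (d : ℕ) (f : Edg d →₀ ℤ) : Prop :=
  ∀ u : Pt d, ∑ i : Fin d, (f (u, i) - f (u - latE d i, i)) = 0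

/-- `B_d`: the additive group of `1`-cycles on the grid. -/
noncomputable def Bgrp (d : ℕ) : AddSubgroup (Edg d →₀ ℤ) where
  carrier := {f | IsCycle d f}
  zero_mem' := by intro u; simp
  add_mem' := by
    intro f g hf hg u
    have h1 := hf u
    have h2 := hg u
    calc ∑ i : Fin d, ((f + g) (u, i) - (f + g) (u - latE d i, i))
        = ∑ i : Fin d, ((f (u, i) - f (u - latE d i, i))
            + (g (u, i) - g (u - latE d i, i))) := by
          refine Finset.sum_congr rfl fun i _ => ?_
          simp only [Finsupp.add_apply]; ring
      _ = 0 := by rw [Finset.sum_add_distrib, h1, h2, add_zero]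
  neg_mem' := by
    intro f hf u
    have h1 := hf u
    calc ∑ i : Fin d, ((-f) (u, i) - (-f) (u - latE d i, i))
        = ∑ i : Fin d, -((f (u, i) - f (u - latE d i, i))) := by
          refine Finset.sum_congr rfl fun i _ => ?_
          simp only [Finsupp.neg_apply]; ring
      _ = 0 := by rw [Finset.sum_neg_distrib, h1, neg_zero]

/-- Translation of `ℤ^d` on edges. -/
def edgeShift (d : ℕ) (u : Pt d) : Edg d ≃ Edg d where
  toFun p := (p.1 + u, p.2)
  invFun p := (p.1 - u, p.2)
  left_inv p := by simp
  right_inv p := by simp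

/-- The translation action of `ℤ^d` on integer functions on edges:
`(u · f)(v, i) = f (v - u, i)`. -/
noncomputable def shiftF (d : ℕ) (u : Pt d) (f : Edg d →₀ ℤ) : Edg d →₀ ℤ :=
  Finsupp.equivMapDomain (edgeShift d u) f

/-- One step of a lattice path: the letter `(i, b)` moves by `eᵢ` if `b` and by `-eᵢ`
otherwise. -/
def stepFn (d : ℕ) (p : Pt d) (s : Fin d × Bool) : Pt d :=
  p + (if s.2 then latE d s.1 else -latE d s.1)

/-- Total displacement of a word (= endpoint of the associated lattice path started at `0`). -/
def disp (d : ℕ) (w : List (Fin d × Bool)) : Pt d :=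
  (w.map fun s => if s.2 then latE d s.1 else -latE d s.1).sum

/-- The signed edge-crossing count function of the lattice path spelled by the word `w`
starting at the point `p`. -/
noncomputable def crossFrom (d : ℕ) : Pt d → List (Fin d × Bool) → (Edg d →₀ ℤ)
  | _, [] => 0
  | p, s :: rest =>
      (if s.2 then Finsupp.single (p, s.1) (1 : ℤ)
        else Finsupp.single (p - latE d s.1, s.1) (-1))
      + crossFrom d (stepFn d p s) rest

/-- The reversed path: spell the word backwards with all signs flipped. -/
def wordInv (d : ℕ) (w : List (Fin d × Bool)) : List (Fin d × Bool) :=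
  w.reverse.map fun s => (s.1, !s.2)

/-- The 2-cocycle associated to a path system `τ`: the signed edge-crossing count of the
closed path `τ_v ⬝ (v + τ_w) ⬝ (τ_{v+w})⁻¹`. -/
noncomputable def betaCocycle (d : ℕ) (τ : Pt d → List (Fin d × Bool)) (v w : Pt d) : Edg d →₀ ℤ :=
  crossFrom d 0 (τ v ++ τ w ++ wordInv d (τ (v + w)))

/-- The elementary `(i,j)`-placket at `v`. -/
noncomputable def placket (d : ℕ) (v : Pt d) (i j : Fin d) : Edg d →₀ ℤ :=
  Finsupp.single (v, i) 1 + Finsupp.single (v + latE d i, j) 1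
    - Finsupp.single (v + latE d j, i) 1 - Finsupp.single (v, j) 1

/-- The staircase steps along axis `i`: `|n|` unit steps, in the positive direction
iff `n ≥ 0`. -/
def stairSteps (d : ℕ) (i : Fin d) (n : ℤ) : List (Fin d × Bool) :=
  List.replicate n.natAbs (i, decide (0 ≤ n))

/-- The standard staircase path from `0` to `v`: first `v 0` steps along axis `0`,
then `v 1` steps along axis `1`, and so on. -/
def staircase (d : ℕ) (v : Pt d) : List (Fin d × Bool) :=
  (List.finRange d).flatMap fun i => stairSteps d i (v i)

/-- The 2-cocycle associated to the standard staircase path system. -/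
noncomputable def beta0 (d : ℕ) : Pt d → Pt d → (Edg d →₀ ℤ) :=
  betaCocycle d (staircase d)

/-- The free metabelian group on `d` generators: `F_d / F_d''`. -/
abbrev Sold (d : ℕ) : Type :=
  FreeGroup (Fin d) ⧸ derivedSeries (FreeGroup (Fin d)) 2

instance (d : ℕ) : (derivedSeries (FreeGroup (Fin d)) 2).Normal :=
  derivedSeries_normal _ _

/-- Multiplication extracted from a `Group` structure given as data. -/
def gmul {α : Type*} (inst : Group α) (a b : α) : α :=
  inst.toDivInvMonoid.toMonoid.toSemigroup.toMul.mul a b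

noncomputable section AuxMetab

open Finsupp

variable {d : ℕ}

/-! ### Shift lemmas -/

lemma shiftF_eq_domCongr (u : Pt d) (f : Edg d →₀ ℤ) :
    shiftF d u f = Finsupp.domCongr (edgeShift d u) f := rfl

lemma shiftF_apply (u : Pt d) (f : Edg d →₀ ℤ) (p : Pt d) (i : Fin d) :
    shiftF d u f (p, i) = f (p - u, i) := rfl

lemma shiftF_add (u : Pt d) (f g : Edg d →₀ ℤ) :
    shiftF d u (f + g) = shiftF d u f + shiftF d u g :=
  map_add (Finsupp.domCongr (edgeShift d u)) f g

lemma shiftF_zero (u : Pt d) : shiftF d u (0 : Edg d →₀ ℤ) = 0 :=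
  map_zero (Finsupp.domCongr (edgeShift d u))

lemma shiftF_neg (u : Pt d) (f : Edg d →₀ ℤ) : shiftF d u (-f) = -shiftF d u f :=
  map_neg (Finsupp.domCongr (edgeShift d u)) f

lemma shiftF_sub (u : Pt d) (f g : Edg d →₀ ℤ) :
    shiftF d u (f - g) = shiftF d u f - shiftF d u g :=
  map_sub (Finsupp.domCongr (edgeShift d u)) f g

lemma shiftF_single (u : Pt d) (p : Pt d) (i : Fin d) (n : ℤ) :
    shiftF d u (Finsupp.single (p, i) n) = Finsupp.single (p + u, i) n := by
  rw [shiftF]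
  exact Finsupp.equivMapDomain_single _ _ _

lemma shiftF_zero_vec (f : Edg d →₀ ℤ) : shiftF d (0 : Pt d) f = f := by
  ext e
  obtain ⟨p, i⟩ := e
  rw [shiftF_apply, sub_zero]

lemma shiftF_shiftF (a b : Pt d) (f : Edg d →₀ ℤ) :
    shiftF d a (shiftF d b f) = shiftF d (a + b) f := by
  ext e
  obtain ⟨p, i⟩ := e
  rw [shiftF_apply, shiftF_apply, shiftF_apply, sub_sub]

/-! ### Displacement lemmas -/

lemma disp_nil : disp d ([] : List (Fin d × Bool)) = 0 := rfl

lemma disp_cons (s : Fin d × Bool) (w : List (Fin d × Bool)) :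
    disp d (s :: w) = (if s.2 then latE d s.1 else -latE d s.1) + disp d w := by
  simp [disp]

lemma disp_append (w₁ w₂ : List (Fin d × Bool)) :
    disp d (w₁ ++ w₂) = disp d w₁ + disp d w₂ := by
  simp [disp]

lemma stepFn_eq (p : Pt d) (s : Fin d × Bool) :
    stepFn d p s = p + (if s.2 then latE d s.1 else -latE d s.1) := rfl

lemma disp_wordInv (w : List (Fin d × Bool)) : disp d (wordInv d w) = -disp d w := by
  induction w with
  | nil => simp [wordInv, disp]
  | cons s w ih =>
      have : wordInv d (s :: w) = wordInv d w ++ [(s.1, !s.2)] := by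
        simp [wordInv]
      rw [this, disp_append, ih, disp_cons]
      rcases s with ⟨i, b⟩
      cases b <;> simp [disp] <;> (try abel)

/-! ### Crossing-count lemmas -/

lemma crossFrom_nil (p : Pt d) : crossFrom d p [] = 0 := rfl

lemma crossFrom_cons (p : Pt d) (s : Fin d × Bool) (w : List (Fin d × Bool)) :
    crossFrom d p (s :: w) =
      (if s.2 then Finsupp.single (p, s.1) (1 : ℤ)
        else Finsupp.single (p - latE d s.1, s.1) (-1)) + crossFrom d (stepFn d p s) w := rfl

lemma crossFrom_append (w₁ w₂ : List (Fin d × Bool)) (p : Pt d) :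
    crossFrom d p (w₁ ++ w₂) = crossFrom d p w₁ + crossFrom d (p + disp d w₁) w₂ := by
  induction w₁ generalizing p with
  | nil => simp [crossFrom_nil, disp_nil]
  | cons s w ih =>
      rw [List.cons_append, crossFrom_cons, crossFrom_cons, ih, disp_cons, stepFn_eq,
        add_assoc, add_assoc]

lemma shiftF_crossFrom (u p : Pt d) (w : List (Fin d × Bool)) :
    shiftF d u (crossFrom d p w) = crossFrom d (p + u) w := by
  induction w generalizing p with
  | nil => simp [crossFrom_nil, shiftF_zero]
  | cons s w ih =>
      rw [crossFrom_cons, crossFrom_cons, shiftF_add, ih]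
      have hstep : stepFn d p s + u = stepFn d (p + u) s := by
        rw [stepFn_eq, stepFn_eq, add_right_comm]
      rw [hstep]
      rcases s with ⟨i, b⟩
      cases b
      · simp only [Bool.false_eq_true, if_false, shiftF_single]
        rw [sub_add_eq_add_sub]
      · simp only [if_true, shiftF_single]

lemma crossFrom_wordInv (w : List (Fin d × Bool)) (p : Pt d) :
    crossFrom d (p + disp d w) (wordInv d w) = -crossFrom d p w := by
  induction w generalizing p with
  | nil => simp [wordInv, crossFrom_nil]
  | cons s w ih =>
      have hw : wordInv d (s :: w) = wordInv d w ++ [(s.1, !s.2)] := by simp [wordInv]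
      have hpt : p + disp d (s :: w) = stepFn d p s + disp d w := by
        rw [disp_cons, stepFn_eq, add_assoc]
      rw [hw, crossFrom_append, hpt, ih, disp_wordInv]
      have hpt2 : stepFn d p s + disp d w + -disp d w = stepFn d p s := by abel
      rw [hpt2]
      rcases s with ⟨i, b⟩
      cases b
      · -- step was negative; inverse letter is (i, true)
        simp only [Bool.not_false, crossFrom_cons, if_true, crossFrom_nil, add_zero,
          Bool.false_eq_true, if_false]
        have : stepFn d p (i, false) = p - latE d i := by
          rw [stepFn_eq]; simp [sub_eq_add_neg]
        rw [this, Finsupp.single_neg]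
        abel
      · simp only [Bool.not_true, crossFrom_cons, Bool.false_eq_true, if_false, if_true,
          crossFrom_nil, add_zero]
        have : stepFn d p (i, true) - latE d i = p := by
          rw [stepFn_eq]; simp
        rw [this, Finsupp.single_neg]
        abel

end AuxMetab
noncomputable section AuxMetab2

open Finsupp

variable {d : ℕ}

/-! ### Staircase lemmas -/

lemma disp_replicate (i : Fin d) (b : Bool) (m : ℕ) :
    disp d (List.replicate m (i, b)) = m • (if b then latE d i else -latE d i) := by
  simp [disp, List.map_replicate, List.sum_replicate]

lemma disp_stairSteps (i : Fin d) (n : ℤ) :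
    disp d (stairSteps d i n) = n • latE d i := by
  rw [stairSteps, disp_replicate]
  by_cases h : 0 ≤ n
  · rw [decide_eq_true h, if_pos rfl, ← natCast_zsmul, Int.natAbs_of_nonneg h]
  · rw [decide_eq_false h]
    simp only [Bool.false_eq_true, if_false]
    rw [← natCast_zsmul, Int.ofNat_natAbs_of_nonpos (le_of_not_ge h)]
    simp

lemma disp_flatMap {β : Type*} (l : List β) (g : β → List (Fin d × Bool)) :
    disp d (l.flatMap g) = (l.map fun a => disp d (g a)).sum := by
  induction l with
  | nil => simp [disp]
  | cons a l ih => rw [List.flatMap_cons, disp_append, ih, List.map_cons, List.sum_cons]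

lemma disp_staircase (v : Pt d) : disp d (staircase d v) = v := by
  rw [staircase, disp_flatMap]
  have : ((List.finRange d).map fun i => disp d (stairSteps d i (v i))).sum
      = ∑ i : Fin d, v i • latE d i := by
    rw [Fin.sum_univ_def]
    congr 1
    exact List.map_congr_left fun i _ => disp_stairSteps i (v i)
  rw [this]
  funext j
  rw [Finset.sum_apply]
  have : ∀ i : Fin d, (v i • latE d i) j = if i = j then v j else 0 := by
    intro i
    simp only [Pi.smul_apply, latE, smul_eq_mul]
    by_cases h : i = j
    · subst h; simp
    · simp [h, Ne.symm h]
  rw [Finset.sum_congr rfl fun i _ => this i, Finset.sum_ite_eq' Finset.univ j fun _ => v j]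
  simp

lemma staircase_zero : staircase d (0 : Pt d) = [] := by
  rw [staircase]
  apply List.flatMap_eq_nil_iff.mpr
  intro i _
  show stairSteps d i ((0 : Pt d) i) = []
  simp [stairSteps]

lemma flatMap_single_aux {β : Type*} [DecidableEq β] (g : β → List (Fin d × Bool)) (i : β) :
    ∀ l : List β, l.Nodup → i ∈ l → (∀ j ∈ l, j ≠ i → g j = []) → l.flatMap g = g i := by
  intro l
  induction l with
  | nil => intro _ h; cases h
  | cons a l ih =>
      intro hnd hmem hz
      rcases List.mem_cons.mp hmem with h | h
      · subst h
        have : l.flatMap g = [] := by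
          apply List.flatMap_eq_nil_iff.mpr
          intro j hj
          exact hz j (List.mem_cons_of_mem _ hj) (fun e => (List.nodup_cons.mp hnd).1 (e ▸ hj))
        rw [List.flatMap_cons, this, List.append_nil]
      · have ha : g a = [] := hz a List.mem_cons_self
          (fun e => (List.nodup_cons.mp hnd).1 (e ▸ h))
        rw [List.flatMap_cons, ha, List.nil_append]
        exact ih (List.nodup_cons.mp hnd).2 h fun j hj => hz j (List.mem_cons_of_mem _ hj)

lemma staircase_latE (i : Fin d) : staircase d (latE d i) = [(i, true)] := by
  rw [staircase]
  rw [flatMap_single_aux _ i (List.finRange d) (List.nodup_finRange d) (List.mem_finRange i)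
    (fun j _ hj => by simp [stairSteps, latE, hj])]
  simp [latE, stairSteps, List.replicate]

/-- The crossing count of the staircase path to `v`. -/
def sig (d : ℕ) (v : Pt d) : Edg d →₀ ℤ := crossFrom d 0 (staircase d v)

lemma sig_zero : sig d (0 : Pt d) = 0 := by rw [sig, staircase_zero, crossFrom_nil]

lemma sig_latE (i : Fin d) : sig d (latE d i) = Finsupp.single ((0 : Pt d), i) 1 := by
  rw [sig, staircase_latE, crossFrom_cons, crossFrom_nil, add_zero, if_pos rfl]

lemma beta0_eq (v w : Pt d) :
    beta0 d v w = sig d v + shiftF d v (sig d w) - sig d (v + w) := by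
  rw [beta0, betaCocycle, crossFrom_append, crossFrom_append]
  have h1 : (0 : Pt d) + disp d (staircase d v) = v := by rw [disp_staircase, zero_add]
  have h2 : (0 : Pt d) + disp d (staircase d v ++ staircase d w) = v + w := by
    rw [disp_append, disp_staircase, disp_staircase, zero_add]
  rw [h1, h2]
  have h3 : crossFrom d v (staircase d w) = shiftF d v (sig d w) := by
    rw [sig, shiftF_crossFrom, zero_add]
  have h4 : crossFrom d (v + w) (wordInv d (staircase d (v + w))) = -sig d (v + w) := by
    have := crossFrom_wordInv (d := d) (staircase d (v + w)) 0
    rw [disp_staircase, zero_add] at this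
    rw [this, sig]
  have h5 : crossFrom d 0 (staircase d v) = sig d v := rfl
  rw [h3, h4, h5]
  abel

lemma beta0_zero_left (w : Pt d) : beta0 d 0 w = 0 := by
  rw [beta0_eq, sig_zero, shiftF_zero_vec, zero_add, zero_add, sub_self]

lemma beta0_zero_right (v : Pt d) : beta0 d v 0 = 0 := by
  rw [beta0_eq, sig_zero, shiftF_zero, add_zero, add_zero, sub_self]

end AuxMetab2
noncomputable section AuxMetab3

open Finsupp

variable {d : ℕ}

/-- Divergence as an additive homomorphism. -/
noncomputable def DvH (d : ℕ) : (Edg d →₀ ℤ) →+ ((Fin d → ℤ) →₀ ℤ) :=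
  Finsupp.liftAddHom fun e =>
    zmultiplesHom _ (Finsupp.single e.1 1 - Finsupp.single (e.1 + latE d e.2) 1)

lemma DvH_single (e : Edg d) (n : ℤ) :
    DvH d (Finsupp.single e n)
      = n • (Finsupp.single e.1 1 - Finsupp.single (e.1 + latE d e.2) 1) :=
  Finsupp.liftAddHom_apply_single _ e n

lemma DvH_crossFrom (w : List (Fin d × Bool)) (p : Pt d) :
    DvH d (crossFrom d p w) = Finsupp.single p 1 - Finsupp.single (p + disp d w) 1 := by
  induction w generalizing p with
  | nil => rw [crossFrom_nil, map_zero, disp_nil, add_zero, sub_self]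
  | cons s w ih =>
      rw [crossFrom_cons, map_add, ih]
      have hq : stepFn d p s + disp d w = p + disp d (s :: w) := by
        rw [stepFn_eq, disp_cons, add_assoc]
      rw [hq]
      have hstep : DvH d (if s.2 then Finsupp.single (p, s.1) (1 : ℤ)
          else Finsupp.single (p - latE d s.1, s.1) (-1))
          = Finsupp.single p 1 - Finsupp.single (stepFn d p s) 1 := by
        rcases s with ⟨i, b⟩
        cases b
        · simp only [Bool.false_eq_true, if_false]
          rw [DvH_single]
          have h1 : p - latE d i + latE d i = p := sub_add_cancel p (latE d i)
          have h2 : stepFn d p (i, false) = p - latE d i := by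
            rw [stepFn_eq]; simp [sub_eq_add_neg]
          rw [h2]
          simp only [h1]
          abel
        · simp only [if_true]
          rw [DvH_single]
          have h2 : stepFn d p (i, true) = p + latE d i := by rw [stepFn_eq]; simp
          rw [h2]
          simp
      rw [hstep]
      abel

lemma DvH_sig (v : Pt d) :
    DvH d (sig d v) = Finsupp.single (0 : Pt d) 1 - Finsupp.single v 1 := by
  rw [sig, DvH_crossFrom, disp_staircase, zero_add]

lemma DvH_shiftF (u : Pt d) (f : Edg d →₀ ℤ) :
    DvH d (shiftF d u f) = Finsupp.domCongr (Equiv.addRight u) (DvH d f) := by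
  have : (DvH d).comp (Finsupp.domCongr (edgeShift d u)).toAddMonoidHom
      = ((Finsupp.domCongr (Equiv.addRight u)).toAddMonoidHom :
          ((Fin d → ℤ) →₀ ℤ) →+ _).comp (DvH d) := by
    apply Finsupp.addHom_ext
    intro e n
    obtain ⟨p, i⟩ := e
    simp only [AddMonoidHom.comp_apply, AddEquiv.coe_toAddMonoidHom]
    have h1 : (Finsupp.domCongr (edgeShift d u)) (Finsupp.single ((p, i) : Edg d) n)
        = Finsupp.single ((p + u, i) : Edg d) n := Finsupp.equivMapDomain_single _ _ _
    rw [h1, DvH_single, DvH_single, map_zsmul, map_sub]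
    have h2 : (Finsupp.domCongr (Equiv.addRight u)) (Finsupp.single p (1 : ℤ))
        = Finsupp.single (p + u) 1 := Finsupp.equivMapDomain_single _ _ _
    have h3 : (Finsupp.domCongr (Equiv.addRight u)) (Finsupp.single (p + latE d i) (1 : ℤ))
        = Finsupp.single (p + latE d i + u) 1 := Finsupp.equivMapDomain_single _ _ _
    rw [h2, h3, add_right_comm]
  exact DFunLike.congr_fun this f

lemma DvH_apply (f : Edg d →₀ ℤ) (u : Pt d) :
    DvH d f u = ∑ i : Fin d, (f (u, i) - f (u - latE d i, i)) := by
  have key : (Finsupp.applyAddHom u).comp (DvH d)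
      = ∑ i : Fin d, ((Finsupp.applyAddHom ((u, i) : Edg d))
          - (Finsupp.applyAddHom ((u - latE d i, i) : Edg d))) := by
    apply Finsupp.addHom_ext
    rintro ⟨p, j⟩ n
    have e1 : ∀ i : Fin d, (Finsupp.single ((p, j) : Edg d) n) (u, i)
        = if i = j then (if p = u then n else 0) else 0 := by
      intro i
      rw [Finsupp.single_apply]
      by_cases h : i = j
      · subst h; simp [Prod.ext_iff, and_comm]
      · rw [if_neg h, if_neg (fun c : ((p,j) : Edg d) = (u,i) =>
          h ((Prod.ext_iff.mp c).2.symm))]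
    have e2 : ∀ i : Fin d, (Finsupp.single ((p, j) : Edg d) n) (u - latE d i, i)
        = if i = j then (if p + latE d j = u then n else 0) else 0 := by
      intro i
      rw [Finsupp.single_apply]
      by_cases h : i = j
      · subst h
        have hiff : (((p,i) : Edg d) = (u - latE d i, i)) ↔ (p + latE d i = u) := by
          constructor
          · intro c
            have hp : p = u - latE d i := congrArg Prod.fst c
            rw [hp]; abel
          · intro hh
            have hp : p = u - latE d i := by rw [← hh]; abel
            rw [hp]
        rw [if_pos rfl]
        by_cases hh : p + latE d i = u
        · rw [if_pos (hiff.mpr hh), if_pos hh]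
        · rw [if_neg (fun c => hh (hiff.mp c)), if_neg hh]
      · rw [if_neg h, if_neg (fun c : ((p,j) : Edg d) = (u - latE d i, i) =>
          h ((Prod.ext_iff.mp c).2.symm))]
    have esum : ∀ g : Fin d → ℤ, (∑ i : Fin d, if i = j then g i else 0) = g j := by
      intro g
      rw [Finset.sum_ite_eq' Finset.univ j g, if_pos (Finset.mem_univ j)]
    have lhs : ((Finsupp.applyAddHom u).comp (DvH d)) (Finsupp.single ((p, j) : Edg d) n)
        = (if p = u then n else 0) - (if p + latE d j = u then n else 0) := by
      rw [AddMonoidHom.comp_apply, DvH_single, Finsupp.applyAddHom_apply]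
      simp only [Finsupp.smul_apply, Finsupp.sub_apply, Finsupp.single_apply, smul_eq_mul]
      split_ifs <;> ring
    have hterm : ∀ i : Fin d, (((Finsupp.applyAddHom ((u, i) : Edg d) : (Edg d →₀ ℤ) →+ ℤ))
          - ((Finsupp.applyAddHom ((u - latE d i, i) : Edg d) : (Edg d →₀ ℤ) →+ ℤ)))
          (Finsupp.single ((p, j) : Edg d) n)
          = (if i = j then (if p = u then n else 0) else 0)
            - (if i = j then (if p + latE d j = u then n else 0) else 0) := by
      intro i
      rw [AddMonoidHom.sub_apply, Finsupp.applyAddHom_apply, Finsupp.applyAddHom_apply,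
        e1 i, e2 i]
    rw [lhs, AddMonoidHom.finset_sum_apply, Finset.sum_congr rfl fun i _ => hterm i,
      Finset.sum_sub_distrib, esum, esum]
  have := DFunLike.congr_fun key f
  simpa using this

lemma mem_Bgrp_iff {f : Edg d →₀ ℤ} : f ∈ Bgrp d ↔ DvH d f = 0 := by
  constructor
  · intro hf
    ext u
    rw [DvH_apply]
    exact hf u
  · intro h u
    rw [← DvH_apply, h]
    rfl

lemma sig_mem_aux (v : Pt d) : DvH d (sig d v) = Finsupp.single 0 1 - Finsupp.single v 1 :=
  DvH_sig v

lemma beta0_mem (v w : Pt d) : beta0 d v w ∈ Bgrp d := by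
  rw [mem_Bgrp_iff, beta0, betaCocycle, DvH_crossFrom]
  have : disp d (staircase d v ++ staircase d w ++ wordInv d (staircase d (v + w))) = 0 := by
    rw [disp_append, disp_append, disp_wordInv, disp_staircase, disp_staircase, disp_staircase]
    abel
  rw [this, add_zero, sub_self]

lemma shiftF_mem {u : Pt d} {f : Edg d →₀ ℤ} (hf : f ∈ Bgrp d) : shiftF d u f ∈ Bgrp d := by
  rw [mem_Bgrp_iff] at hf ⊢
  rw [DvH_shiftF, hf, map_zero]

end AuxMetab3
noncomputable section AuxMetab4

open Finsupp

variable {d : ℕ}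

lemma inv_mem_aux (v : Pt d) : sig d (-v) + shiftF d (-v) (sig d v) ∈ Bgrp d := by
  rw [mem_Bgrp_iff, map_add, DvH_sig, DvH_shiftF, DvH_sig, map_sub]
  have h0 : (Finsupp.domCongr (Equiv.addRight (-v))) (Finsupp.single (0 : Pt d) (1 : ℤ))
      = Finsupp.single (0 + -v : Pt d) 1 := Finsupp.equivMapDomain_single _ _ _
  have h1 : (Finsupp.domCongr (Equiv.addRight (-v))) (Finsupp.single v (1 : ℤ))
      = Finsupp.single (v + -v : Pt d) 1 := Finsupp.equivMapDomain_single _ _ _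
  rw [h0, h1, zero_add, add_neg_cancel]
  abel

lemma Gmul_mem (p q : Pt d × ↥(Bgrp d)) :
    (p.2 : Edg d →₀ ℤ) + shiftF d p.1 (q.2 : Edg d →₀ ℤ) + beta0 d p.1 q.1 ∈ Bgrp d :=
  add_mem (add_mem p.2.2 (shiftF_mem q.2.2)) (beta0_mem _ _)

lemma Ginv_mem (p : Pt d × ↥(Bgrp d)) :
    -(shiftF d (-p.1) (p.2 : Edg d →₀ ℤ)) - sig d (-p.1) - shiftF d (-p.1) (sig d p.1)
      ∈ Bgrp d := by
  have h1 : -(shiftF d (-p.1) (p.2 : Edg d →₀ ℤ)) ∈ Bgrp d := neg_mem (shiftF_mem p.2.2)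
  have h2 := inv_mem_aux (d := d) p.1
  have : -(shiftF d (-p.1) (p.2 : Edg d →₀ ℤ)) - sig d (-p.1) - shiftF d (-p.1) (sig d p.1)
      = -(shiftF d (-p.1) (p.2 : Edg d →₀ ℤ))
        - (sig d (-p.1) + shiftF d (-p.1) (sig d p.1)) := by abel
  rw [this]
  exact sub_mem h1 h2

noncomputable instance Ggroup (d : ℕ) : Group (Pt d × ↥(Bgrp d)) where
  mul p q := (p.1 + q.1, ⟨(p.2 : Edg d →₀ ℤ) + shiftF d p.1 (q.2 : Edg d →₀ ℤ)
    + beta0 d p.1 q.1, Gmul_mem p q⟩)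
  one := (0, 0)
  inv p := (-p.1, ⟨-(shiftF d (-p.1) (p.2 : Edg d →₀ ℤ)) - sig d (-p.1)
    - shiftF d (-p.1) (sig d p.1), Ginv_mem p⟩)
  mul_assoc a b c := by
    refine Prod.ext (add_assoc _ _ _) (Subtype.ext ?_)
    show ((a.2 : Edg d →₀ ℤ) + shiftF d a.1 (b.2 : Edg d →₀ ℤ) + beta0 d a.1 b.1)
        + shiftF d (a.1 + b.1) (c.2 : Edg d →₀ ℤ) + beta0 d (a.1 + b.1) c.1
      = (a.2 : Edg d →₀ ℤ) + shiftF d a.1 ((b.2 : Edg d →₀ ℤ)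
          + shiftF d b.1 (c.2 : Edg d →₀ ℤ) + beta0 d b.1 c.1)
        + beta0 d a.1 (b.1 + c.1)
    simp only [beta0_eq, shiftF_add, shiftF_sub, shiftF_shiftF, add_assoc]
    abel
  one_mul a := by
    refine Prod.ext (zero_add _) (Subtype.ext ?_)
    show (0 : Edg d →₀ ℤ) + shiftF d 0 (a.2 : Edg d →₀ ℤ) + beta0 d 0 a.1 = (a.2 : Edg d →₀ ℤ)
    rw [shiftF_zero_vec, beta0_zero_left, zero_add, add_zero]
  mul_one a := by
    refine Prod.ext (add_zero _) (Subtype.ext ?_)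
    show (a.2 : Edg d →₀ ℤ) + shiftF d a.1 (0 : Edg d →₀ ℤ) + beta0 d a.1 0
      = (a.2 : Edg d →₀ ℤ)
    rw [shiftF_zero, beta0_zero_right, add_zero, add_zero]
  inv_mul_cancel a := by
    refine Prod.ext (neg_add_cancel _) (Subtype.ext ?_)
    show (-(shiftF d (-a.1) (a.2 : Edg d →₀ ℤ)) - sig d (-a.1)
        - shiftF d (-a.1) (sig d a.1))
        + shiftF d (-a.1) (a.2 : Edg d →₀ ℤ) + beta0 d (-a.1) a.1 = 0
    rw [beta0_eq, neg_add_cancel, sig_zero, sub_zero]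
    abel

lemma Gmul_fst (p q : Pt d × ↥(Bgrp d)) : (p * q).1 = p.1 + q.1 := rfl

lemma Gmul_snd (p q : Pt d × ↥(Bgrp d)) :
    ((p * q).2 : Edg d →₀ ℤ)
      = (p.2 : Edg d →₀ ℤ) + shiftF d p.1 (q.2 : Edg d →₀ ℤ) + beta0 d p.1 q.1 := rfl

lemma Gone_def : (1 : Pt d × ↥(Bgrp d)) = (0, 0) := rfl

lemma Gmul_zero_zero (a b : ↥(Bgrp d)) :
    ((0, a) : Pt d × ↥(Bgrp d)) * (0, b) = (0, a + b) := by
  refine Prod.ext (add_zero _) (Subtype.ext ?_)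
  show (a : Edg d →₀ ℤ) + shiftF d 0 (b : Edg d →₀ ℤ) + beta0 d 0 0
    = ((a + b : ↥(Bgrp d)) : Edg d →₀ ℤ)
  rw [shiftF_zero_vec, beta0_zero_left, add_zero]
  rfl

/-- The subgroup `{0} × B` as a homomorphic image of `B`. -/
def jB (d : ℕ) : Multiplicative ↥(Bgrp d) →* (Pt d × ↥(Bgrp d)) :=
  MonoidHom.mk' (fun a => ((0, a.toAdd) : Pt d × ↥(Bgrp d)))
    (fun a b => (Gmul_zero_zero _ _).symm)

lemma Gzpow_zero (a : ↥(Bgrp d)) (n : ℤ) :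
    ((0, a) : Pt d × ↥(Bgrp d)) ^ n = (0, n • a) := by
  have h1 : ((0, a) : Pt d × ↥(Bgrp d)) = jB d (Multiplicative.ofAdd a) := rfl
  rw [h1, ← map_zpow]
  rfl

/-- First-coordinate projection homomorphism. -/
def piG (d : ℕ) : (Pt d × ↥(Bgrp d)) →* Multiplicative (Pt d) where
  toFun p := Multiplicative.ofAdd p.1
  map_one' := rfl
  map_mul' _ _ := rfl

/-- `MMh` sends `δ_u` to `σ_u`. -/
def MMh (d : ℕ) : ((Fin d → ℤ) →₀ ℤ) →+ (Edg d →₀ ℤ) :=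
  Finsupp.liftAddHom fun u => zmultiplesHom _ (sig d u)

/-- The basic cycle associated to an edge. -/
def ced (d : ℕ) (e : Edg d) : Edg d →₀ ℤ :=
  sig d e.1 + Finsupp.single e 1 - sig d (e.1 + latE d e.2)

def Lch (d : ℕ) : (Edg d →₀ ℤ) →+ (Edg d →₀ ℤ) :=
  Finsupp.liftAddHom fun e => zmultiplesHom _ (ced d e)

lemma Lch_single (e : Edg d) (n : ℤ) : Lch d (Finsupp.single e n) = n • ced d e :=
  Finsupp.liftAddHom_apply_single _ e n

lemma MMh_single (u : Pt d) (n : ℤ) : MMh d (Finsupp.single u n) = n • sig d u :=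
  Finsupp.liftAddHom_apply_single _ u n

lemma Lch_eq (f : Edg d →₀ ℤ) : Lch d f = f + MMh d (DvH d f) := by
  have key : Lch d = (AddMonoidHom.id _) + (MMh d).comp (DvH d) := by
    apply Finsupp.addHom_ext
    intro e n
    rw [AddMonoidHom.add_apply, AddMonoidHom.id_apply, AddMonoidHom.comp_apply,
      Lch_single, DvH_single, map_zsmul, map_sub, MMh_single, MMh_single, ced]
    simp only [one_smul, smul_sub, smul_add, Finsupp.smul_single', mul_one]
    abel
  rw [key]
  rfl

lemma ced_mem (e : Edg d) : ced d e ∈ Bgrp d := by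
  rw [mem_Bgrp_iff, ced, map_sub, map_add, DvH_sig, DvH_sig, DvH_single]
  simp only [one_smul]
  abel

lemma Lch_mem (f : Edg d →₀ ℤ) : Lch d f ∈ Bgrp d := by
  rw [mem_Bgrp_iff]
  have key : (DvH d).comp (Lch d) = 0 := by
    apply Finsupp.addHom_ext
    intro e n
    rw [AddMonoidHom.comp_apply, Lch_single, map_zsmul,
      mem_Bgrp_iff.mp (ced_mem e), smul_zero]
    rfl
  exact DFunLike.congr_fun key f

lemma Lch_of_mem {f : Edg d →₀ ℤ} (hf : f ∈ Bgrp d) : Lch d f = f := by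
  rw [Lch_eq, mem_Bgrp_iff.mp hf, map_zero, add_zero]

end AuxMetab4
noncomputable section AuxMetab5

open Finsupp

variable {d : ℕ}

/-- The Magnus-type homomorphism from the free group. -/
def Phi (d : ℕ) : FreeGroup (Fin d) →* (Pt d × ↥(Bgrp d)) :=
  FreeGroup.lift fun i => ((latE d i, 0) : Pt d × ↥(Bgrp d))

lemma Phi_of (i : Fin d) : Phi d (FreeGroup.of i) = (latE d i, 0) :=
  FreeGroup.lift_apply_of

lemma crossW_mem (w : List (Fin d × Bool)) :
    crossFrom d 0 w - sig d (disp d w) ∈ Bgrp d := by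
  rw [mem_Bgrp_iff, map_sub, DvH_crossFrom, DvH_sig, zero_add, sub_sub_sub_cancel_left]
  exact sub_self _

lemma Ginv_fst (p : Pt d × ↥(Bgrp d)) : (p⁻¹).1 = -p.1 := rfl

lemma Ginv_snd (p : Pt d × ↥(Bgrp d)) :
    ((p⁻¹).2 : Edg d →₀ ℤ) = -(shiftF d (-p.1) (p.2 : Edg d →₀ ℤ)) - sig d (-p.1)
      - shiftF d (-p.1) (sig d p.1) := rfl

lemma mk_single_true (i : Fin d) : FreeGroup.mk [(i, true)] = FreeGroup.of i := rfl

lemma mk_single_false (i : Fin d) : FreeGroup.mk [(i, false)] = (FreeGroup.of i)⁻¹ := by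
  rw [← mk_single_true, FreeGroup.inv_mk]
  simp [FreeGroup.invRev]

lemma Phi_mk (w : List (Fin d × Bool)) :
    Phi d (FreeGroup.mk w)
      = (disp d w, ⟨crossFrom d 0 w - sig d (disp d w), crossW_mem w⟩) := by
  induction w with
  | nil =>
      have h1 : FreeGroup.mk ([] : List (Fin d × Bool)) = 1 := by
        rw [← FreeGroup.one_eq_mk]
      rw [h1, map_one]
      refine Prod.ext ?_ (Subtype.ext ?_)
      · show (0 : Pt d) = disp d ([] : List (Fin d × Bool))
        rfl
      · show (0 : Edg d →₀ ℤ) = crossFrom d 0 ([] : List (Fin d × Bool)) - sig d (disp d [])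
        rw [crossFrom_nil, disp_nil, sig_zero, sub_zero]
  | cons s w ih =>
      have hsplit : FreeGroup.mk (s :: w) = FreeGroup.mk [s] * FreeGroup.mk w := by
        rw [FreeGroup.mul_mk]; rfl
      rw [hsplit, map_mul, ih]
      rcases s with ⟨i, b⟩
      cases b
      · -- negative letter
        rw [mk_single_false, map_inv, Phi_of]
        refine Prod.ext ?_ (Subtype.ext ?_)
        · show -latE d i + disp d w = disp d ((i, false) :: w)
          rw [disp_cons]
          simp
        · rw [Gmul_snd]
          have hfst : (((latE d i, (0 : ↥(Bgrp d))) : Pt d × ↥(Bgrp d))⁻¹).1 = -latE d i := rfl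
          rw [Ginv_snd, hfst]
          show -(shiftF d (-latE d i) (0 : Edg d →₀ ℤ)) - sig d (-latE d i)
              - shiftF d (-latE d i) (sig d (latE d i))
              + shiftF d (-latE d i) (crossFrom d 0 w - sig d (disp d w))
              + beta0 d (-latE d i) (disp d w)
            = crossFrom d 0 ((i, false) :: w) - sig d (disp d ((i, false) :: w))
          have hd : disp d ((i, false) :: w) = -latE d i + disp d w := by
            rw [disp_cons]; simp
          have hstep : stepFn d (0 : Pt d) (i, false) = -latE d i := by
            rw [stepFn_eq]; simp
          rw [crossFrom_cons, hd, hstep]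
          simp only [Bool.false_eq_true, if_false]
          have hcw : crossFrom d (-latE d i) w = shiftF d (-latE d i) (crossFrom d 0 w) := by
            rw [shiftF_crossFrom, zero_add]
          have hsh : shiftF d (-latE d i) (sig d (latE d i))
              = Finsupp.single ((-latE d i : Pt d), i) 1 := by
            rw [sig_latE, shiftF_single, zero_add]
          have hz : (0 : Pt d) - latE d i = -latE d i := zero_sub _
          rw [hcw, hsh, hz, beta0_eq, shiftF_zero, shiftF_sub, Finsupp.single_neg]
          abel
      · -- positive letter
        rw [mk_single_true, Phi_of]
        refine Prod.ext ?_ (Subtype.ext ?_)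
        · show latE d i + disp d w = disp d ((i, true) :: w)
          rw [disp_cons]
          simp
        · rw [Gmul_snd]
          show (0 : Edg d →₀ ℤ)
              + shiftF d (latE d i) (crossFrom d 0 w - sig d (disp d w))
              + beta0 d (latE d i) (disp d w)
            = crossFrom d 0 ((i, true) :: w) - sig d (disp d ((i, true) :: w))
          have hd : disp d ((i, true) :: w) = latE d i + disp d w := by
            rw [disp_cons]; simp
          have hstep : stepFn d (0 : Pt d) (i, true) = latE d i := by
            rw [stepFn_eq]; simp
          rw [crossFrom_cons, hd, hstep]
          simp only [if_true]
          have hcw : crossFrom d (latE d i) w = shiftF d (latE d i) (crossFrom d 0 w) := by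
            rw [shiftF_crossFrom, zero_add]
          rw [hcw, beta0_eq, shiftF_sub, sig_latE]
          abel

end AuxMetab5
noncomputable section AuxMetab6

open Finsupp

variable {d : ℕ}

/-! ### Metabelian structure of the model group -/

lemma commG_le_ker : commutator (Pt d × ↥(Bgrp d)) ≤ (piG d).ker := by
  rw [commutator_def, Subgroup.commutator_le]
  intro g _ h _
  rw [MonoidHom.mem_ker, map_commutatorElement]
  exact commutatorElement_eq_one_iff_mul_comm.mpr (mul_comm _ _)

lemma fst_zero_comm (a b : Pt d × ↥(Bgrp d)) (ha : a.1 = 0) (hb : b.1 = 0) :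
    a * b = b * a := by
  refine Prod.ext ?_ (Subtype.ext ?_)
  · rw [Gmul_fst, Gmul_fst, ha, hb]
  · rw [Gmul_snd, Gmul_snd, ha, hb, shiftF_zero_vec, shiftF_zero_vec, beta0_zero_left]
    abel

lemma dsG2 : derivedSeries (Pt d × ↥(Bgrp d)) 2 = ⊥ := by
  have h1 : derivedSeries (Pt d × ↥(Bgrp d)) 1 ≤ (piG d).ker := by
    rw [derivedSeries_one]
    exact commG_le_ker
  rw [eq_bot_iff, derivedSeries_succ, Subgroup.commutator_le]
  intro g hg h hh
  rw [Subgroup.mem_bot, commutatorElement_eq_one_iff_mul_comm]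
  have hg' : Multiplicative.ofAdd g.1 = 1 := h1 hg
  have hh' : Multiplicative.ofAdd h.1 = 1 := h1 hh
  exact fst_zero_comm g h (by exact_mod_cast hg') (by exact_mod_cast hh')

lemma hker : derivedSeries (FreeGroup (Fin d)) 2 ≤ (Phi d).ker := by
  intro x hx
  have h1 : Phi d x ∈ (derivedSeries (FreeGroup (Fin d)) 2).map (Phi d) :=
    Subgroup.mem_map_of_mem _ hx
  have h2 : Phi d x ∈ derivedSeries (Pt d × ↥(Bgrp d)) 2 :=
    map_derivedSeries_le_derivedSeries (Phi d) 2 h1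
  rw [dsG2, Subgroup.mem_bot] at h2
  exact h2

/-- The homomorphism from the free metabelian group to the model group. -/
def PhiBar (d : ℕ) : Sold d →* (Pt d × ↥(Bgrp d)) :=
  QuotientGroup.lift _ (Phi d) hker

lemma PhiBar_mk (x : FreeGroup (Fin d)) :
    PhiBar d (QuotientGroup.mk x) = Phi d x := rfl

/-! ### The derived subgroup of `Sold` is abelian -/

lemma dsSold2 : derivedSeries (Sold d) 2 = ⊥ := by
  have hs : Function.Surjective (QuotientGroup.mk' (derivedSeries (FreeGroup (Fin d)) 2)) :=
    QuotientGroup.mk'_surjective _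
  rw [← map_derivedSeries_eq hs 2, eq_bot_iff]
  rintro x hx
  rw [Subgroup.mem_map] at hx
  obtain ⟨y, hy, rfl⟩ := hx
  rw [Subgroup.mem_bot]
  exact (QuotientGroup.eq_one_iff y).mpr hy

lemma sold_comm {a b : Sold d} (ha : a ∈ commutator (Sold d)) (hb : b ∈ commutator (Sold d)) :
    a * b = b * a := by
  have h1 : ⁅a, b⁆ ∈ derivedSeries (Sold d) 2 := by
    show ⁅a, b⁆ ∈ ⁅derivedSeries (Sold d) 1, derivedSeries (Sold d) 1⁆
    rw [derivedSeries_one]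
    exact Subgroup.commutator_mem_commutator ha hb
  rw [dsSold2, Subgroup.mem_bot] at h1
  exact commutatorElement_eq_one_iff_mul_comm.mp h1

noncomputable instance commSoldCommGroup : CommGroup ↥(commutator (Sold d)) :=
  { (inferInstance : Group ↥(commutator (Sold d))) with
    mul_comm := fun a b => Subtype.ext (sold_comm a.2 b.2) }

/-! ### Words of zero displacement lie in the commutator subgroup -/

lemma exponent_zero_mem {x : FreeGroup (Fin d)} (hx : piG d (Phi d x) = 1) :
    x ∈ commutator (FreeGroup (Fin d)) := by
  classical
  set a : Fin d → Abelianization (FreeGroup (Fin d)) :=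
    fun i => Abelianization.of (FreeGroup.of i) with ha
  have hr_mul : ∀ v w : Multiplicative (Pt d),
      (∏ i : Fin d, (a i) ^ ((v * w).toAdd i))
        = (∏ i : Fin d, (a i) ^ (v.toAdd i)) * ∏ i : Fin d, (a i) ^ (w.toAdd i) := by
    intro v w
    rw [← Finset.prod_mul_distrib]
    refine Finset.prod_congr rfl fun i _ => ?_
    rw [← zpow_add]
    rfl
  set r : Multiplicative (Pt d) →* Abelianization (FreeGroup (Fin d)) :=
    MonoidHom.mk' (fun v => ∏ i : Fin d, (a i) ^ (v.toAdd i)) hr_mul with hrdef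
  have hr : r.comp ((piG d).comp (Phi d)) = Abelianization.of := by
    apply FreeGroup.ext_hom
    intro i
    rw [MonoidHom.comp_apply, MonoidHom.comp_apply, Phi_of]
    show ∏ j : Fin d, (a j) ^ ((latE d i) j) = Abelianization.of (FreeGroup.of i)
    have hterm : ∀ j : Fin d, (a j) ^ ((latE d i) j) = if j = i then a j else 1 := by
      intro j
      by_cases h : j = i
      · subst h; simp [latE]
      · simp [latE, h]
    rw [Finset.prod_congr rfl fun j _ => hterm j,
      Finset.prod_ite_eq' Finset.univ i a, if_pos (Finset.mem_univ i)]
  have habel : Abelianization.of x = 1 := by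
    have := DFunLike.congr_fun hr x
    rw [MonoidHom.comp_apply, MonoidHom.comp_apply, hx, map_one] at this
    exact this.symm
  exact (QuotientGroup.eq_one_iff x).mp habel

lemma mem_commutator_sold {x : FreeGroup (Fin d)}
    (hx : x ∈ commutator (FreeGroup (Fin d))) :
    (QuotientGroup.mk x : Sold d) ∈ commutator (Sold d) := by
  have h1 : Subgroup.map (QuotientGroup.mk' (derivedSeries (FreeGroup (Fin d)) 2))
      (commutator (FreeGroup (Fin d))) ≤ commutator (Sold d) := by
    rw [commutator_def, commutator_def, Subgroup.map_commutator]
    exact Subgroup.commutator_mono le_top le_top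
  exact h1 (Subgroup.mem_map_of_mem _ hx)

/-! ### Schreier generators -/

/-- The closed word representing the Schreier generator of the edge `e`. -/
def gword (d : ℕ) (e : Edg d) : List (Fin d × Bool) :=
  staircase d e.1 ++ [(e.2, true)] ++ wordInv d (staircase d (e.1 + latE d e.2))

/-- Images of the staircase words in `Sol_d`. -/
def Tst (d : ℕ) (v : Pt d) : Sold d := QuotientGroup.mk (FreeGroup.mk (staircase d v))

lemma Tst_zero : Tst d 0 = 1 := by
  rw [Tst, staircase_zero, ← FreeGroup.one_eq_mk]
  rfl

lemma disp_gword (e : Edg d) : disp d (gword d e) = 0 := by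
  rw [gword, disp_append, disp_append, disp_wordInv, disp_staircase, disp_staircase,
    disp_cons, disp_nil]
  simp only [if_true]
  abel

lemma cross_gword (e : Edg d) : crossFrom d 0 (gword d e) = ced d e := by
  obtain ⟨u, i⟩ := e
  rw [gword, crossFrom_append, crossFrom_append]
  have hd1 : (0 : Pt d) + disp d (staircase d u) = u := by rw [disp_staircase, zero_add]
  have hd2 : (0 : Pt d) + disp d (staircase d u ++ [(i, true)]) = u + latE d i := by
    rw [disp_append, disp_staircase, disp_cons, disp_nil, zero_add, add_zero]
    simp
  rw [hd1, hd2]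
  have h3 : crossFrom d (u + latE d i) (wordInv d (staircase d (u + latE d i)))
      = -sig d (u + latE d i) := by
    have := crossFrom_wordInv (d := d) (staircase d (u + latE d i)) 0
    rw [disp_staircase, zero_add] at this
    rw [this, sig]
  rw [h3, crossFrom_cons, crossFrom_nil, add_zero]
  simp only [if_true]
  show sig d u + Finsupp.single (u, i) 1 + -sig d (u + latE d i) = ced d (u, i)
  rw [ced]
  abel

lemma wordInv_eq_invRev (l : List (Fin d × Bool)) : wordInv d l = FreeGroup.invRev l := by
  simp [wordInv, FreeGroup.invRev, List.map_reverse]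

lemma mk_gword (e : Edg d) :
    FreeGroup.mk (gword d e)
      = FreeGroup.mk (staircase d e.1) * FreeGroup.of e.2
        * (FreeGroup.mk (staircase d (e.1 + latE d e.2)))⁻¹ := by
  rw [gword, ← FreeGroup.mul_mk, ← FreeGroup.mul_mk, mk_single_true,
    FreeGroup.inv_mk, wordInv_eq_invRev]

lemma gword_mem (e : Edg d) :
    (QuotientGroup.mk (FreeGroup.mk (gword d e)) : Sold d) ∈ commutator (Sold d) := by
  apply mem_commutator_sold
  apply exponent_zero_mem
  have h1 : Phi d (FreeGroup.mk (gword d e)) = (disp d (gword d e), _) := Phi_mk _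
  rw [h1]
  show Multiplicative.ofAdd (disp d (gword d e)) = 1
  rw [disp_gword]
  rfl

/-- The Schreier generator as an element of the commutator subgroup of `Sol_d`. -/
def gD (d : ℕ) (e : Edg d) : ↥(commutator (Sold d)) :=
  ⟨QuotientGroup.mk (FreeGroup.mk (gword d e)), gword_mem e⟩

/-- The homomorphism from edge chains into the (abelian) commutator subgroup. -/
def mu (d : ℕ) : (Edg d →₀ ℤ) →+ Additive ↥(commutator (Sold d)) :=
  Finsupp.liftAddHom fun e => zmultiplesHom _ (Additive.ofMul (gD d e))

/-- The corresponding map into `Sol_d`. -/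
def mel (d : ℕ) (h : Edg d →₀ ℤ) : Sold d := ((mu d h).toMul : ↥(commutator (Sold d)))

lemma mel_zero : mel d 0 = 1 := by
  rw [mel, map_zero]
  rfl

lemma mel_add (h₁ h₂ : Edg d →₀ ℤ) : mel d (h₁ + h₂) = mel d h₁ * mel d h₂ := by
  rw [mel, mel, mel, map_add]
  rfl

lemma mel_mem (h : Edg d →₀ ℤ) : mel d h ∈ commutator (Sold d) :=
  SetLike.coe_mem _

lemma mel_single (e : Edg d) (n : ℤ) :
    mel d (Finsupp.single e n)
      = (QuotientGroup.mk (FreeGroup.mk (gword d e)) : Sold d) ^ n := by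
  rw [mel, mu, Finsupp.liftAddHom_apply_single, zmultiplesHom_apply, toMul_zsmul]
  push_cast
  rfl

end AuxMetab6
noncomputable section AuxMetab7

open Finsupp

variable {d : ℕ}

lemma telescope (w : List (Fin d × Bool)) : ∀ p : Pt d,
    Tst d p * (QuotientGroup.mk (FreeGroup.mk w) : Sold d) * (Tst d (p + disp d w))⁻¹
      = mel d (crossFrom d p w) := by
  induction w with
  | nil =>
      intro p
      rw [crossFrom_nil, mel_zero, disp_nil, add_zero, ← FreeGroup.one_eq_mk]
      have : (QuotientGroup.mk (1 : FreeGroup (Fin d)) : Sold d) = 1 := rfl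
      rw [this, mul_one, mul_inv_cancel]
  | cons s w ih =>
      intro p
      have hsplit : FreeGroup.mk (s :: w) = FreeGroup.mk [s] * FreeGroup.mk w := by
        rw [FreeGroup.mul_mk]; rfl
      have hpt : p + disp d (s :: w) = stepFn d p s + disp d w := by
        rw [disp_cons, stepFn_eq, add_assoc]
      have hmk : (QuotientGroup.mk (FreeGroup.mk [s] * FreeGroup.mk w) : Sold d)
          = QuotientGroup.mk (FreeGroup.mk [s]) * QuotientGroup.mk (FreeGroup.mk w) := rfl
      have key : Tst d p * (QuotientGroup.mk (FreeGroup.mk [s]) : Sold d)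
          * (Tst d (stepFn d p s))⁻¹
          = mel d (if s.2 then Finsupp.single ((p, s.1) : Edg d) (1 : ℤ)
              else Finsupp.single ((p - latE d s.1, s.1) : Edg d) (-1)) := by
        rcases s with ⟨i, b⟩
        cases b
        · -- negative letter
          simp only [Bool.false_eq_true, if_false]
          have hq : stepFn d p (i, false) = p - latE d i := by
            rw [stepFn_eq]; simp [sub_eq_add_neg]
          have hback : p - latE d i + latE d i = p := sub_add_cancel _ _
          rw [hq, mel_single, zpow_neg, zpow_one, mk_gword]
          show Tst d p * (QuotientGroup.mk (FreeGroup.mk [(i, false)]) : Sold d)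
              * (Tst d (p - latE d i))⁻¹
            = ((QuotientGroup.mk (FreeGroup.mk (staircase d ((p - latE d i : Pt d), i).1)
                * FreeGroup.of ((p - latE d i : Pt d), i).2
                * (FreeGroup.mk (staircase d (((p - latE d i : Pt d), i).1
                    + latE d (((p - latE d i : Pt d), i).2))))⁻¹) : Sold d))⁻¹
          have hc : (((p - latE d i : Pt d), i) : Edg d).1 + latE d (((p - latE d i : Pt d), i) : Edg d).2
              = p := hback
          rw [mk_single_false]
          show Tst d p * (QuotientGroup.mk ((FreeGroup.of i)⁻¹) : Sold d)
              * (Tst d (p - latE d i))⁻¹ = _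
          rw [hc]
          have e1 : (QuotientGroup.mk ((FreeGroup.of i)⁻¹) : Sold d)
              = (QuotientGroup.mk (FreeGroup.of i) : Sold d)⁻¹ := rfl
          have e2 : (QuotientGroup.mk (FreeGroup.mk (staircase d (p - latE d i))
              * FreeGroup.of i * (FreeGroup.mk (staircase d p))⁻¹) : Sold d)
              = Tst d (p - latE d i) * QuotientGroup.mk (FreeGroup.of i) * (Tst d p)⁻¹ := rfl
          rw [e1, e2]
          group
        · -- positive letter
          simp only [if_true]
          have hq : stepFn d p (i, true) = p + latE d i := by
            rw [stepFn_eq]; simp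
          rw [hq, mel_single, zpow_one, mk_gword, mk_single_true]
          rfl
      calc Tst d p * (QuotientGroup.mk (FreeGroup.mk (s :: w)) : Sold d)
            * (Tst d (p + disp d (s :: w)))⁻¹
          = (Tst d p * (QuotientGroup.mk (FreeGroup.mk [s]) : Sold d)
              * (Tst d (stepFn d p s))⁻¹)
            * (Tst d (stepFn d p s) * (QuotientGroup.mk (FreeGroup.mk w) : Sold d)
              * (Tst d (stepFn d p s + disp d w))⁻¹) := by
            rw [hsplit, hmk, hpt]
            group
        _ = mel d (crossFrom d p (s :: w)) := by
            rw [key, ih (stepFn d p s), ← mel_add, crossFrom_cons]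

lemma mkw_eq (w : List (Fin d × Bool)) :
    (QuotientGroup.mk (FreeGroup.mk w) : Sold d)
      = mel d (crossFrom d 0 w) * Tst d (disp d w) := by
  have h := telescope w 0
  rw [Tst_zero, one_mul, zero_add] at h
  rw [← h]
  group

lemma PhiBar_Tst (v : Pt d) : PhiBar d (Tst d v) = (v, 0) := by
  rw [Tst, PhiBar_mk, Phi_mk]
  refine Prod.ext ?_ (Subtype.ext ?_)
  · exact disp_staircase v
  · show crossFrom d 0 (staircase d v) - sig d (disp d (staircase d v)) = 0
    rw [disp_staircase]
    exact sub_self _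

lemma PhiBar_gD (e : Edg d) :
    PhiBar d (QuotientGroup.mk (FreeGroup.mk (gword d e))) = (0, ⟨ced d e, ced_mem e⟩) := by
  rw [PhiBar_mk, Phi_mk]
  refine Prod.ext (disp_gword e) (Subtype.ext ?_)
  show crossFrom d 0 (gword d e) - sig d (disp d (gword d e)) = ced d e
  rw [disp_gword, sig_zero, sub_zero, cross_gword]

lemma PhiBar_mel (h : Edg d →₀ ℤ) :
    PhiBar d (mel d h) = (0, ⟨Lch d h, Lch_mem h⟩) := by
  induction h using Finsupp.induction with
  | zero =>
      rw [mel_zero, map_one]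
      refine Prod.ext rfl (Subtype.ext ?_)
      show (0 : Edg d →₀ ℤ) = Lch d 0
      rw [map_zero]
  | single_add e n f hef hn ih =>
      rw [mel_add, map_mul, ih, mel_single, map_zpow, PhiBar_gD, Gzpow_zero,
        Gmul_zero_zero]
      refine Prod.ext rfl (Subtype.ext ?_)
      show ((n • (⟨ced d e, ced_mem e⟩ : ↥(Bgrp d)) + ⟨Lch d f, Lch_mem f⟩ : ↥(Bgrp d))
          : Edg d →₀ ℤ) = Lch d (Finsupp.single e n + f)
      rw [map_add, Lch_single]
      rfl

/-- The inverse map. -/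
def Xi (d : ℕ) (p : Pt d × ↥(Bgrp d)) : Sold d :=
  mel d ((p.2 : Edg d →₀ ℤ) + sig d p.1) * Tst d p.1

lemma Xi_left_inv : ∀ x : Sold d, Xi d (PhiBar d x) = x := by
  intro x
  obtain ⟨g, rfl⟩ := QuotientGroup.mk_surjective x
  have hg : g = FreeGroup.mk g.toWord := (FreeGroup.mk_toWord).symm
  rw [hg, PhiBar_mk, Phi_mk, Xi]
  show mel d ((crossFrom d 0 g.toWord - sig d (disp d g.toWord)) + sig d (disp d g.toWord))
      * Tst d (disp d g.toWord) = _
  rw [sub_add_cancel, ← mkw_eq]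

lemma Xi_right_inv : ∀ p : Pt d × ↥(Bgrp d), PhiBar d (Xi d p) = p := by
  intro p
  rw [Xi, map_mul, PhiBar_mel, PhiBar_Tst]
  refine Prod.ext ?_ (Subtype.ext ?_)
  · rw [Gmul_fst]
    exact zero_add _
  · rw [Gmul_snd]
    show Lch d ((p.2 : Edg d →₀ ℤ) + sig d p.1) + shiftF d 0 ((0 : ↥(Bgrp d)) : Edg d →₀ ℤ)
        + beta0 d 0 p.1 = (p.2 : Edg d →₀ ℤ)
    have hc : ((0 : ↥(Bgrp d)) : Edg d →₀ ℤ) = 0 := rfl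
    rw [hc, shiftF_zero, beta0_zero_left, add_zero, add_zero, Lch_eq, map_add,
      mem_Bgrp_iff.mp p.2.2, zero_add, DvH_sig, map_sub, MMh_single, MMh_single,
      one_smul, one_smul, sig_zero]
    abel

end AuxMetab7
/-- The multiplication `(v,f)·(w,g) = (v+w, f + v·g + β(v,w))` (with `β`
the cocycle of the staircase path system) makes `ℤ^d × B_d` a group, and there is a group
isomorphism `Ψ : Sol_d ≃ ℤ^d × B_d` sending the image of `x_i` to `(e_i, 0)`, mapping the
derived subgroup of `Sol_d` onto `{0} × B_d`, and sending the class of `[x_i, x_j]` to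
`(0, the elementary (i,j)-placket at 0)`. -/
theorem free_metabelian_topological_model (d : ℕ) :
    ∃ inst : Group (Pt d × ↥(Bgrp d)),
      (∀ p q : Pt d × ↥(Bgrp d),
        (gmul inst p q).1 = p.1 + q.1 ∧
        ((gmul inst p q).2 : Edg d →₀ ℤ)
          = (p.2 : Edg d →₀ ℤ) + shiftF d p.1 (q.2 : Edg d →₀ ℤ) + beta0 d p.1 q.1) ∧
      ∃ Ψ : Sold d ≃ (Pt d × ↥(Bgrp d)),
        (∀ a b : Sold d, Ψ (a * b) = gmul inst (Ψ a) (Ψ b)) ∧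
        (∀ i : Fin d,
          Ψ (QuotientGroup.mk (FreeGroup.of i)) = (latE d i, 0)) ∧
        (Ψ '' (commutator (Sold d) : Set (Sold d))
          = {p : Pt d × ↥(Bgrp d) | p.1 = 0}) ∧
        (∀ i j : Fin d, i ≠ j →
          (Ψ (QuotientGroup.mk ⁅FreeGroup.of i, FreeGroup.of j⁆)).1 = 0 ∧
          ((Ψ (QuotientGroup.mk ⁅FreeGroup.of i, FreeGroup.of j⁆)).2 : Edg d →₀ ℤ)
            = placket d 0 i j) := by
  classical
  refine ⟨Ggroup d, fun p q => ⟨rfl, rfl⟩, ?_⟩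
  refine ⟨⟨fun x => PhiBar d x, Xi d, Xi_left_inv, Xi_right_inv⟩, ?_, ?_, ?_, ?_⟩
  · intro a b
    show PhiBar d (a * b) = gmul (Ggroup d) (PhiBar d a) (PhiBar d b)
    rw [map_mul]
    rfl
  · intro i
    show PhiBar d (QuotientGroup.mk (FreeGroup.of i)) = (latE d i, 0)
    rw [PhiBar_mk, Phi_of]
  · ext p
    constructor
    · rintro ⟨x, hx, rfl⟩
      show (PhiBar d x).1 = 0
      have hle : commutator (Sold d) ≤ ((piG d).comp (PhiBar d)).ker := by
        rw [commutator_def, Subgroup.commutator_le]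
        intro g _ h _
        rw [MonoidHom.mem_ker, map_commutatorElement]
        exact commutatorElement_eq_one_iff_mul_comm.mpr (mul_comm _ _)
      have h1 := hle hx
      rw [MonoidHom.mem_ker, MonoidHom.comp_apply] at h1
      have h2 : Multiplicative.ofAdd (PhiBar d x).1 = 1 := h1
      exact_mod_cast h2
    · intro hp
      refine ⟨mel d (p.2 : Edg d →₀ ℤ), mel_mem _, ?_⟩
      show PhiBar d (mel d (p.2 : Edg d →₀ ℤ)) = p
      rw [PhiBar_mel]
      refine Prod.ext ?_ (Subtype.ext ?_)
      · exact hp.symm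
      · show Lch d (p.2 : Edg d →₀ ℤ) = (p.2 : Edg d →₀ ℤ)
        exact Lch_of_mem p.2.2
  · intro i j hij
    have hc : (⁅FreeGroup.of i, FreeGroup.of j⁆ : FreeGroup (Fin d))
        = FreeGroup.mk [(i, true), (j, true), (i, false), (j, false)] := by
      rw [commutatorElement_def, ← mk_single_true i, ← mk_single_true j,
        FreeGroup.inv_mk, FreeGroup.inv_mk, FreeGroup.mul_mk, FreeGroup.mul_mk,
        FreeGroup.mul_mk]
      rfl
    have hd : disp d [(i, true), (j, true), (i, false), (j, false)] = 0 := by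
      simp only [disp, List.map_cons, List.map_nil, List.sum_cons, List.sum_nil, if_true,
        Bool.false_eq_true, if_false]
      show latE d i + (latE d j + (-latE d i + (-latE d j + 0))) = 0
      abel
    have hcr : crossFrom d (0 : Pt d) [(i, true), (j, true), (i, false), (j, false)]
        = placket d 0 i j := by
      rw [crossFrom_cons, crossFrom_cons, crossFrom_cons, crossFrom_cons, crossFrom_nil]
      simp only [stepFn_eq, if_true, Bool.false_eq_true, if_false]
      have h3 : (0 : Pt d) + latE d i + latE d j - latE d i = 0 + latE d j := by abel
      have h4 : (0 : Pt d) + latE d i + latE d j + -latE d i - latE d j = 0 := by abel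
      rw [h3, h4, placket, Finsupp.single_neg, Finsupp.single_neg]
      abel
    constructor
    · show (PhiBar d (QuotientGroup.mk ⁅FreeGroup.of i, FreeGroup.of j⁆)).1 = 0
      rw [hc, PhiBar_mk, Phi_mk]
      exact hd
    · show ((PhiBar d (QuotientGroup.mk ⁅FreeGroup.of i, FreeGroup.of j⁆)).2
          : Edg d →₀ ℤ) = placket d 0 i j
      rw [hc, PhiBar_mk, Phi_mk]
      show crossFrom d 0 [(i, true), (j, true), (i, false), (j, false)]
          - sig d (disp d [(i, true), (j, true), (i, false), (j, false)])
        = placket d 0 i j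
      rw [hd, sig_zero, sub_zero, hcr]
end

section
/- Two words w₁ and w₂ in the alphabet {x_1^{±1},…,x_d^{±1}} represent the same element of the free metabelian group Sol_d = F_d/F_d'' if and only if w₁(v,i) = w₂(v,i) for every oriented edge (v,i) of the lattice ℤ^d. -/
open scoped BigOperators

namespace SolProof

variable {d : ℕ} {G : Type} [Group G]

abbrev FGrp (d : ℕ) := FreeGroup (Fin d)
abbrev QGrp (d : ℕ) := Multiplicative (Pt d)

def toQ (d : ℕ) : FGrp d →* QGrp d :=
  FreeGroup.lift fun i => Multiplicative.ofAdd (latE d i)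

/-- Magnus-type group: pairs (g, (mᵢ)) with mᵢ ∈ ℤ[G]. -/
@[ext] structure Mag (d : ℕ) (G : Type) [Group G] where
  q : G
  m : Fin d → MonoidAlgebra ℤ G

namespace Mag

noncomputable instance : Mul (Mag d G) :=
  ⟨fun a b => ⟨a.q * b.q, fun i => a.m i + MonoidAlgebra.single a.q 1 * b.m i⟩⟩
noncomputable instance : One (Mag d G) := ⟨⟨1, 0⟩⟩
noncomputable instance : Inv (Mag d G) :=
  ⟨fun a => ⟨a.q⁻¹, fun i => -(MonoidAlgebra.single a.q⁻¹ 1 * a.m i)⟩⟩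

@[simp] lemma mul_q (a b : Mag d G) : (a * b).q = a.q * b.q := rfl
@[simp] lemma mul_m (a b : Mag d G) (i : Fin d) :
    (a * b).m i = a.m i + MonoidAlgebra.single a.q 1 * b.m i := rfl
@[simp] lemma one_q : (1 : Mag d G).q = 1 := rfl
@[simp] lemma one_m (i : Fin d) : (1 : Mag d G).m i = 0 := rfl
@[simp] lemma inv_q (a : Mag d G) : (a⁻¹).q = a.q⁻¹ := rfl
@[simp] lemma inv_m (a : Mag d G) (i : Fin d) :
    (a⁻¹).m i = -(MonoidAlgebra.single a.q⁻¹ 1 * a.m i) := rfl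

noncomputable instance : Group (Mag d G) where
  mul_assoc a b c := by
    ext i
    · simp [mul_assoc]
    · simp only [mul_m, mul_q]
      rw [add_assoc, mul_add, ← mul_assoc, MonoidAlgebra.single_mul_single, one_mul]
  one_mul a := by
    ext i
    · simp
    · simp [← MonoidAlgebra.one_def]
  mul_one a := by
    ext i
    · simp
    · simp
  inv_mul_cancel a := by
    ext i
    · simp
    · simp

end Mag

/-- Projection onto the group component. -/
def projHom : Mag d G →* G where
  toFun z := z.q
  map_one' := rfl
  map_mul' _ _ := rfl

/-- Functoriality of `Mag`. -/
noncomputable def magMap {H : Type} [Group H] (f : G →* H) : Mag d G →* Mag d H where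
  toFun z := ⟨f z.q, fun i => MonoidAlgebra.mapDomainRingHom ℤ f (z.m i)⟩
  map_one' := by ext i <;> simp
  map_mul' a b := by
    refine Mag.ext (f.map_mul a.q b.q) (funext fun i => ?_)
    change (MonoidAlgebra.mapDomainRingHom ℤ f) (a.m i + MonoidAlgebra.single a.q 1 * b.m i)
      = (MonoidAlgebra.mapDomainRingHom ℤ f) (a.m i)
        + MonoidAlgebra.single (f a.q) 1 * (MonoidAlgebra.mapDomainRingHom ℤ f) (b.m i)
    rw [map_add, map_mul]
    congr 2
    simp [MonoidAlgebra.mapDomainRingHom_apply, Finsupp.mapDomain_single]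

@[simp] lemma magMap_q {H : Type} [Group H] (f : G →* H) (z : Mag d G) :
    (magMap f z).q = f z.q := rfl
@[simp] lemma magMap_m {H : Type} [Group H] (f : G →* H) (z : Mag d G) (i : Fin d) :
    (magMap f z).m i = MonoidAlgebra.mapDomain f (z.m i) := rfl

/-- Generators of Magnus-type subgroups. -/
noncomputable def gen (y : Fin d → G) (i : Fin d) : Mag d G :=
  ⟨y i, fun j => if j = i then 1 else 0⟩

noncomputable def mlift (y : Fin d → G) : FGrp d →* Mag d G :=
  FreeGroup.lift (gen y)

lemma proj_mlift (y : Fin d → G) (w : FGrp d) :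
    (mlift y w).q = FreeGroup.lift y w := by
  have : (projHom (d := d)).comp (mlift y) = FreeGroup.lift y := by
    apply FreeGroup.ext_hom
    intro a
    simp [mlift, gen, projHom]
  exact DFunLike.congr_fun this w

lemma mliftF_q (w : FGrp d) : (mlift FreeGroup.of w).q = w := by
  rw [proj_mlift, FreeGroup.lift_of_apply]

lemma mliftQ_q (w : FGrp d) :
    (mlift (fun i => Multiplicative.ofAdd (latE d i)) w).q = toQ d w := by
  rw [proj_mlift]; rfl


/-- The set of `z` satisfying the Fox fundamental identity. -/
noncomputable def fundSub (y : Fin d → G) : Subgroup (Mag d G) where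
  carrier := {z | ∑ i : Fin d, z.m i * (MonoidAlgebra.single (y i) (1 : ℤ) - 1)
    = MonoidAlgebra.single z.q 1 - 1}
  one_mem' := by
    simp [← MonoidAlgebra.one_def]
  mul_mem' := by
    intro a b ha hb
    simp only [Set.mem_setOf_eq] at ha hb ⊢
    simp only [Mag.mul_m, Mag.mul_q, add_mul, Finset.sum_add_distrib, ha]
    rw [Finset.sum_congr rfl (fun i _ => mul_assoc (MonoidAlgebra.single a.q (1:ℤ)) _ _),
      ← Finset.mul_sum, hb, mul_sub, mul_one, MonoidAlgebra.single_mul_single, mul_one]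
    abel
  inv_mem' := by
    intro a ha
    simp only [Set.mem_setOf_eq] at ha ⊢
    simp only [Mag.inv_m, Mag.inv_q, neg_mul, Finset.sum_neg_distrib]
    rw [Finset.sum_congr rfl
        (fun i _ => mul_assoc (MonoidAlgebra.single a.q⁻¹ (1:ℤ)) _ _),
      ← Finset.mul_sum, ha, mul_sub, mul_one, MonoidAlgebra.single_mul_single,
      inv_mul_cancel, mul_one, ← MonoidAlgebra.one_def, neg_sub]

lemma fund (y : Fin d → G) (w : FGrp d) :
    ∑ i : Fin d, (mlift y w).m i * (MonoidAlgebra.single (y i) (1 : ℤ) - 1)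
      = MonoidAlgebra.single ((mlift y w).q) 1 - 1 := by
  have : ∀ w : FGrp d, mlift y w ∈ fundSub y := by
    intro w
    refine FreeGroup.induction_on w ?_ ?_ ?_ ?_
    · rw [map_one]; exact (fundSub y).one_mem
    · intro x
      have hpure : (pure x : FGrp d) = FreeGroup.of x := rfl
      rw [mlift, FreeGroup.lift_apply_of]
      show _ ∈ ({z | ∑ i : Fin d, z.m i * (MonoidAlgebra.single (y i) (1 : ℤ) - 1)
        = MonoidAlgebra.single z.q 1 - 1} : Set (Mag d G))
      simp only [Set.mem_setOf_eq, gen, ite_mul, one_mul, zero_mul]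
      rw [Finset.sum_ite_eq' Finset.univ x
        (fun i => MonoidAlgebra.single (y i) (1:ℤ) - 1)]
      simp
    · intro x hx
      rw [map_inv]; exact (fundSub y).inv_mem hx
    · intro x z hx hz
      rw [map_mul]; exact (fundSub y).mul_mem hx hz
  exact this w


noncomputable abbrev mliftQ (d : ℕ) : FGrp d →* Mag d (QGrp d) :=
  mlift (fun i => Multiplicative.ofAdd (latE d i))

lemma mk_cons (s : Fin d × Bool) (L : List (Fin d × Bool)) :
    FreeGroup.mk (s :: L) = FreeGroup.mk [s] * FreeGroup.mk L := by
  rw [FreeGroup.mul_mk]; rfl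

lemma mk_true (j : Fin d) : FreeGroup.mk [(j, true)] = FreeGroup.of j := rfl

lemma mk_false (j : Fin d) : FreeGroup.mk [(j, false)] = (FreeGroup.of j)⁻¹ := by
  rw [← mk_true, FreeGroup.inv_mk]; rfl

lemma ofAdd_shift (a b : Pt d) (h : a = b) :
    Multiplicative.ofAdd a = Multiplicative.ofAdd b := by rw [h]

lemma cross_corr (w : List (Fin d × Bool)) : ∀ (p v : Pt d) (i : Fin d),
    crossFrom d p w (v, i)
      = ((mliftQ d (FreeGroup.mk w)).m i).coeff (Multiplicative.ofAdd (v - p)) := by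
  induction w with
  | nil =>
    intro p v i
    rw [show FreeGroup.mk ([] : List (Fin d × Bool)) = 1 from FreeGroup.one_eq_mk.symm]
    simp [crossFrom]
  | cons s rest ih =>
    obtain ⟨j, b⟩ := s
    intro p v i
    rw [mk_cons, map_mul]
    cases b
    · -- negative letter
      rw [mk_false, map_inv, mliftQ, mlift, FreeGroup.lift_apply_of]
      simp only [crossFrom, Bool.false_eq_true, if_false, Mag.mul_m]
      rw [Finsupp.add_apply, MonoidAlgebra.coeff_add, Finsupp.add_apply]
      congr 1
      · simp only [Mag.inv_m, Mag.inv_q, gen, mul_ite, mul_one, mul_zero]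
        by_cases hij : i = j
        · subst hij
          rw [if_pos rfl, MonoidAlgebra.coeff_neg, Finsupp.neg_apply, MonoidAlgebra.coeff_single, Finsupp.single_apply, Finsupp.single_apply]
          by_cases hv : v = p - latE d i
          · have hcond : (Multiplicative.ofAdd (latE d i))⁻¹
                = Multiplicative.ofAdd (v - p) := by
              rw [← ofAdd_neg]
              exact ofAdd_shift _ _ (by rw [hv]; abel)
            rw [if_pos (by rw [hv]), if_pos hcond]
          · have hcond : ¬((Multiplicative.ofAdd (latE d i))⁻¹
                = Multiplicative.ofAdd (v - p)) := by
              intro hc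
              apply hv
              have h2 := congrArg Multiplicative.toAdd hc
              simp only [toAdd_inv, toAdd_ofAdd] at h2
              have h3 : v = -latE d i + p := sub_eq_iff_eq_add.mp h2.symm
              rw [h3]; abel
            rw [if_neg (fun hc => by cases hc; exact hv rfl), if_neg hcond, neg_zero]
        · rw [if_neg hij, neg_zero, MonoidAlgebra.coeff_zero, Finsupp.zero_apply, Finsupp.single_apply,
            if_neg (fun hc => by cases hc; exact hij rfl)]
      · rw [Mag.inv_q, MonoidAlgebra.single_mul_apply, one_mul, inv_inv,
          ih (stepFn d p (j, false)) v i]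
        congr 1
        show Multiplicative.ofAdd (v - stepFn d p (j, false))
          = Multiplicative.ofAdd (latE d j) * Multiplicative.ofAdd (v - p)
        rw [← ofAdd_add]
        exact ofAdd_shift _ _ (by simp [stepFn]; abel)
    · -- positive letter
      rw [mk_true, mliftQ, mlift, FreeGroup.lift_apply_of]
      simp only [crossFrom, if_true, Mag.mul_m]
      rw [Finsupp.add_apply, MonoidAlgebra.coeff_add, Finsupp.add_apply]
      congr 1
      · simp only [gen]
        by_cases hij : i = j
        · subst hij
          rw [if_pos rfl, MonoidAlgebra.one_def, MonoidAlgebra.coeff_single, Finsupp.single_apply,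
            Finsupp.single_apply]
          by_cases hv : v = p
          · rw [if_pos (by rw [hv]),
              if_pos (show (1 : QGrp d) = Multiplicative.ofAdd (v - p) by
                rw [hv, sub_self, ofAdd_zero])]
          · rw [if_neg (fun hc => by cases hc; exact hv rfl),
              if_neg (fun hc => hv (by
                have h2 := congrArg Multiplicative.toAdd hc
                simp only [toAdd_ofAdd, toAdd_one] at h2
                exact sub_eq_zero.mp h2.symm))]
        · rw [if_neg hij, MonoidAlgebra.coeff_zero, Finsupp.zero_apply, Finsupp.single_apply,
            if_neg (fun hc => by cases hc; exact hij rfl)]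
      · rw [show (gen (fun i => Multiplicative.ofAdd (latE d i)) j).q
            = Multiplicative.ofAdd (latE d j) from rfl,
          MonoidAlgebra.single_mul_apply, one_mul, ih (stepFn d p (j, true)) v i]
        congr 1
        rw [← ofAdd_neg, ← ofAdd_add]
        exact ofAdd_shift _ _ (by simp [stepFn]; abel)


/-- The kernel of the abelianization map (= derived subgroup). -/
def RS (d : ℕ) : Subgroup (FGrp d) := (toQ d).ker

/-- Canonical word with prescribed abelianization. -/
def sigw (d : ℕ) (a : Pt d) : FGrp d :=
  (((List.finRange d)).map fun i => FreeGroup.of i ^ a i).prod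

lemma toAdd_list_prod (l : List (QGrp d)) :
    Multiplicative.toAdd l.prod = (l.map Multiplicative.toAdd).sum := by
  induction l with
  | nil => rfl
  | cons x l ih => simp [toAdd_mul, ih]

lemma toQ_sigw (a : Pt d) : toQ d (sigw d a) = Multiplicative.ofAdd a := by
  have h1 : toQ d (sigw d a)
      = (((List.finRange d)).map fun i => (Multiplicative.ofAdd (latE d i)) ^ a i).prod := by
    rw [sigw, map_list_prod, List.map_map]
    refine congrArg List.prod (List.map_congr_left fun i _ => ?_)
    simp only [Function.comp_apply, map_zpow, toQ, FreeGroup.lift_apply_of]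
  apply Multiplicative.toAdd.injective
  rw [h1, toAdd_list_prod, List.map_map, toAdd_ofAdd]
  have h2 : ∀ i : Fin d, (Multiplicative.toAdd ∘ fun i => Multiplicative.ofAdd (latE d i) ^ a i) i
      = a i • latE d i := by
    intro i; simp [toAdd_zpow]
  rw [List.map_congr_left (fun i _ => h2 i), ← Fin.sum_univ_def]
  funext j
  rw [Finset.sum_apply]
  have : ∀ i : Fin d, (a i • latE d i) j = if j = i then a i else 0 := by
    intro i
    simp only [Pi.smul_apply, latE, smul_eq_mul, mul_ite, mul_one, mul_zero]
  rw [Finset.sum_congr rfl (fun i _ => this i), Finset.sum_ite_eq Finset.univ j a,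
    if_pos (Finset.mem_univ j)]

lemma sigw_zero : sigw d (0 : Pt d) = 1 := by
  rw [sigw]
  apply List.prod_eq_one
  intro x hx
  simp only [List.mem_map] at hx
  obtain ⟨i, _, rfl⟩ := hx
  simp

/-- Canonical derived-subgroup part of a word. -/
def rhow (d : ℕ) (w : FGrp d) : RS d :=
  ⟨w * (sigw d (Multiplicative.toAdd (toQ d w)))⁻¹, by
    rw [RS, MonoidHom.mem_ker, map_mul, map_inv, toQ_sigw, ofAdd_toAdd,
      mul_inv_cancel]⟩

lemma rhow_one : rhow d (1 : FGrp d) = 1 := by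
  apply Subtype.ext
  simp [rhow, sigw_zero]

lemma rhow_spec (w : FGrp d) : (rhow d w : FGrp d) * sigw d (Multiplicative.toAdd (toQ d w)) = w := by
  simp [rhow]

lemma rhow_mul {r : FGrp d} (hr : r ∈ RS d) (w : FGrp d) :
    rhow d (r * w) = ⟨r, hr⟩ * rhow d w := by
  apply Subtype.ext
  have hq : toQ d (r * w) = toQ d w := by
    rw [map_mul, MonoidHom.mem_ker.mp hr, one_mul]
  show (r * w) * (sigw d (Multiplicative.toAdd (toQ d (r * w))))⁻¹ = r * (w * _⁻¹)
  rw [hq, mul_assoc]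

/-- The key additive retraction `ℤ[F] → (R)ᵃᵇ`. -/
noncomputable def gam (d : ℕ) :
    MonoidAlgebra ℤ (FGrp d) →+ Additive (Abelianization (RS d)) :=
  (Finsupp.liftAddHom fun w =>
    zmultiplesHom _ (Additive.ofMul (Abelianization.of (rhow d w)))).comp
    MonoidAlgebra.coeffAddEquiv.toAddMonoidHom

lemma gam_single (w : FGrp d) (n : ℤ) :
    gam d (MonoidAlgebra.single w n)
      = n • Additive.ofMul (Abelianization.of (rhow d w)) := by
  rw [gam, AddMonoidHom.comp_apply]
  erw [Finsupp.liftAddHom_apply_single]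
  rw [zmultiplesHom_apply]

/-- The subgroup `I_R · ℤ[F]`. -/
noncomputable def Ksub (d : ℕ) : AddSubgroup (MonoidAlgebra ℤ (FGrp d)) :=
  AddSubgroup.closure {ξ | ∃ r w : FGrp d, r ∈ RS d ∧
    ξ = MonoidAlgebra.single (r * w) 1 - MonoidAlgebra.single w 1}

/-- mapDomain along the canonical section, as a self-map of `ℤ[F]`. -/
noncomputable def PP (d : ℕ) : MonoidAlgebra ℤ (FGrp d) →+ MonoidAlgebra ℤ (FGrp d) :=
  { toFun := MonoidAlgebra.mapDomain (fun w => sigw d (Multiplicative.toAdd (toQ d w)))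
    map_zero' := MonoidAlgebra.mapDomain_zero _
    map_add' := MonoidAlgebra.mapDomain_add _ }

lemma PP_single (w : FGrp d) (c : ℤ) :
    PP d (MonoidAlgebra.single w c)
      = MonoidAlgebra.single (sigw d (Multiplicative.toAdd (toQ d w))) c :=
  MonoidAlgebra.mapDomain_single

lemma claimA {ξ : MonoidAlgebra ℤ (FGrp d)}
    (h : MonoidAlgebra.mapDomain (toQ d) ξ = 0) : ξ ∈ Ksub d := by
  have step1 : ∀ ξ : MonoidAlgebra ℤ (FGrp d), ξ - PP d ξ ∈ Ksub d := by
    intro ξ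
    induction ξ using MonoidAlgebra.induction with
    | zero =>
      rw [map_zero, sub_zero]
      exact (Ksub d).zero_mem
    | single_add w c ξ' hw hc ihx =>
      rw [map_add, PP_single, add_sub_add_comm]
      refine (Ksub d).add_mem ?_ ihx
      have hs : (MonoidAlgebra.single w c
            - MonoidAlgebra.single (sigw d (Multiplicative.toAdd (toQ d w))) c)
          = c • (MonoidAlgebra.single w (1:ℤ)
            - MonoidAlgebra.single (sigw d (Multiplicative.toAdd (toQ d w))) 1) := by
        rw [smul_sub, MonoidAlgebra.smul_single', MonoidAlgebra.smul_single', mul_one]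
      rw [hs]
      refine AddSubgroup.zsmul_mem _ (AddSubgroup.subset_closure ?_) c
      refine ⟨rhow d w, sigw d (Multiplicative.toAdd (toQ d w)), (rhow d w).2, ?_⟩
      rw [rhow_spec]
  have step2 : PP d ξ = 0 := by
    have h2 : PP d ξ
        = MonoidAlgebra.mapDomain (fun q : QGrp d => sigw d (Multiplicative.toAdd q))
            (MonoidAlgebra.mapDomain (toQ d) ξ) :=
      congrArg MonoidAlgebra.ofCoeff (Finsupp.mapDomain_comp (v := ξ.coeff) (f := ⇑(toQ d))
        (g := fun q : QGrp d => sigw d (Multiplicative.toAdd q)))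
    rw [h, MonoidAlgebra.mapDomain_zero] at h2
    exact h2
  have h3 := step1 ξ
  rw [step2, sub_zero] at h3
  exact h3

lemma claimB (y : FGrp d) {ξ : MonoidAlgebra ℤ (FGrp d)} (hξ : ξ ∈ Ksub d) :
    gam d (ξ * (MonoidAlgebra.single y 1 - 1)) = 0 := by
  have hle : Ksub d ≤ ((gam d).comp
      (AddMonoidHom.mulRight (MonoidAlgebra.single y (1:ℤ) - 1))).ker := by
    rw [Ksub, AddSubgroup.closure_le]
    rintro ξ' ⟨r, w, hr, rfl⟩
    rw [SetLike.mem_coe, AddMonoidHom.mem_ker, AddMonoidHom.comp_apply,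
      AddMonoidHom.mulRight_apply]
    rw [sub_mul, mul_sub, mul_sub, mul_one, mul_one,
      MonoidAlgebra.single_mul_single, MonoidAlgebra.single_mul_single, mul_one]
    rw [map_sub, map_sub, map_sub, gam_single, gam_single, gam_single, gam_single]
    rw [one_smul, one_smul, one_smul, one_smul]
    rw [show r * w * y = r * (w * y) from mul_assoc r w y]
    rw [rhow_mul hr (w * y), rhow_mul hr w]
    simp only [map_mul, ofMul_mul]
    abel
  have h2 := hle hξ
  rwa [AddMonoidHom.mem_ker, AddMonoidHom.comp_apply, AddMonoidHom.mulRight_apply] at h2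

lemma mlift_compat (w : FGrp d) :
    magMap (toQ d) (mlift FreeGroup.of w) = mliftQ d w := by
  have h : (magMap (toQ d)).comp (mlift (FreeGroup.of : Fin d → FGrp d)) = mliftQ d := by
    apply FreeGroup.ext_hom
    intro a
    rw [MonoidHom.comp_apply, mlift, mliftQ, mlift, FreeGroup.lift_apply_of, FreeGroup.lift_apply_of]
    refine Mag.ext ?_ (funext fun j => ?_)
    · show toQ d (FreeGroup.of a) = Multiplicative.ofAdd (latE d a)
      rw [toQ, FreeGroup.lift_apply_of]
    · show MonoidAlgebra.mapDomain (toQ d) ((gen FreeGroup.of a).m j) = (gen _ a).m j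
      rw [gen, gen]
      dsimp only
      by_cases hj : j = a
      · rw [if_pos hj, if_pos hj, MonoidAlgebra.one_def, MonoidAlgebra.one_def]
        exact MonoidAlgebra.mapDomain_single
      · rw [if_neg hj, if_neg hj]
        exact MonoidAlgebra.mapDomain_zero _
  exact DFunLike.congr_fun h w

/-- `R` is the commutator subgroup. -/
lemma RS_eq : RS d = commutator (FGrp d) := by
  apply le_antisymm
  · intro w hw
    have hψ : ∃ ψ : QGrp d →* Abelianization (FGrp d),
        ψ.comp (toQ d) = Abelianization.of := by
      refine ⟨MonoidHom.mk' (fun q => ∏ i : Fin d,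
        (Abelianization.of (FreeGroup.of i)) ^ (Multiplicative.toAdd q i)) ?_, ?_⟩
      · intro a b
        rw [← Finset.prod_mul_distrib]
        refine Finset.prod_congr rfl fun i _ => ?_
        rw [toAdd_mul, Pi.add_apply, zpow_add]
      · apply FreeGroup.ext_hom
        intro a
        rw [MonoidHom.comp_apply, toQ, FreeGroup.lift_apply_of, MonoidHom.mk'_apply,
          toAdd_ofAdd]
        refine Finset.prod_eq_single a (fun j _ hj => ?_) (fun h => absurd (Finset.mem_univ a) h)
          |>.trans ?_
        · rw [latE, if_neg hj, zpow_zero]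
        · rw [latE, if_pos rfl, zpow_one]
    obtain ⟨ψ, hc⟩ := hψ
    have h1 : Abelianization.of w = 1 := by
      rw [← hc, MonoidHom.comp_apply, MonoidHom.mem_ker.mp hw, map_one]
    exact (QuotientGroup.eq_one_iff w).mp h1
  · exact Abelianization.commutator_subset_ker (toQ d)

/-- `mliftQ` kills `[R, R]`. -/
lemma commRR_le_ker : ⁅RS d, RS d⁆ ≤ (mliftQ d).ker := by
  rw [Subgroup.commutator_le]
  intro a ha b hb
  rw [MonoidHom.mem_ker, map_commutatorElement]
  refine commutatorElement_eq_one_iff_commute.mpr ?_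
  have hqa : (mliftQ d a).q = 1 := by rw [mliftQ_q]; exact MonoidHom.mem_ker.mp ha
  have hqb : (mliftQ d b).q = 1 := by rw [mliftQ_q]; exact MonoidHom.mem_ker.mp hb
  show mliftQ d a * mliftQ d b = mliftQ d b * mliftQ d a
  refine Mag.ext ?_ (funext fun i => ?_)
  · rw [Mag.mul_q, Mag.mul_q, mul_comm]
  · rw [Mag.mul_m, Mag.mul_m, hqa, hqb, ← MonoidAlgebra.one_def, one_mul, one_mul,
      add_comm]

lemma dS2_eq : derivedSeries (FGrp d) 2 = ⁅RS d, RS d⁆ := by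
  have h1 : derivedSeries (FGrp d) 1 = RS d := by
    rw [derivedSeries_one, RS_eq]
  rw [show (2:ℕ) = 1 + 1 from rfl, derivedSeries_succ, h1]

lemma hard_direction {w₁ w₂ : List (Fin d × Bool)}
    (hc : ∀ (v : Pt d) (i : Fin d),
      crossFrom d 0 w₁ (v, i) = crossFrom d 0 w₂ (v, i)) :
    (FreeGroup.mk w₁)⁻¹ * FreeGroup.mk w₂ ∈ derivedSeries (FGrp d) 2 := by
  set W₁ := FreeGroup.mk w₁ with hW₁
  set W₂ := FreeGroup.mk w₂ with hW₂
  have hm : ∀ i, (mliftQ d W₁).m i = (mliftQ d W₂).m i := by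
    intro i
    ext x
    have h1 := cross_corr w₁ (0 : Pt d) (Multiplicative.toAdd x) i
    have h2 := cross_corr w₂ (0 : Pt d) (Multiplicative.toAdd x) i
    rw [hc _ i, h2] at h1
    rw [sub_zero, ofAdd_toAdd] at h1
    exact h1.symm
  have hq : (mliftQ d W₁).q = (mliftQ d W₂).q := by
    have f1 := fund (fun i => Multiplicative.ofAdd (latE d i)) W₁
    have f2 := fund (fun i => Multiplicative.ofAdd (latE d i)) W₂
    have hsum : ∑ i : Fin d, (mliftQ d W₁).m i
          * (MonoidAlgebra.single (Multiplicative.ofAdd (latE d i)) (1:ℤ) - 1)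
        = ∑ i : Fin d, (mliftQ d W₂).m i
          * (MonoidAlgebra.single (Multiplicative.ofAdd (latE d i)) (1:ℤ) - 1) :=
      Finset.sum_congr rfl fun i _ => by rw [hm i]
    have hss : MonoidAlgebra.single ((mliftQ d W₁).q) (1:ℤ) - 1
        = MonoidAlgebra.single ((mliftQ d W₂).q) 1 - 1 := by
      rw [← f1, ← f2]; exact hsum
    have hsingle : MonoidAlgebra.single ((mliftQ d W₁).q) (1:ℤ)
        = MonoidAlgebra.single ((mliftQ d W₂).q) 1 := by
      have := sub_left_inj.mp hss
      exact this
    exact MonoidAlgebra.single_left_injective one_ne_zero hsingle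
  have hW : mliftQ d W₁ = mliftQ d W₂ := Mag.ext hq (funext hm)
  have hg1 : mliftQ d (W₁⁻¹ * W₂) = 1 := by
    rw [map_mul, map_inv, hW, inv_mul_cancel]
  set g := W₁⁻¹ * W₂ with hgdef
  have hgq : toQ d g = 1 := by rw [← mliftQ_q, hg1, Mag.one_q]
  have hDF : ∀ i, (mlift FreeGroup.of g).m i ∈ Ksub d := by
    intro i
    apply claimA
    have h4 : MonoidAlgebra.mapDomain (toQ d) ((mlift FreeGroup.of g).m i)
        = (mliftQ d g).m i := by
      rw [← mlift_compat g, magMap_m]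
    rw [h4, hg1, Mag.one_m]
  have hfund := fund (FreeGroup.of : Fin d → FGrp d) g
  rw [mliftF_q] at hfund
  have hL : gam d (∑ i : Fin d, (mlift FreeGroup.of g).m i
      * (MonoidAlgebra.single (FreeGroup.of i) (1:ℤ) - 1)) = 0 := by
    rw [map_sum]
    exact Finset.sum_eq_zero fun i _ => claimB _ (hDF i)
  have hR : gam d (MonoidAlgebra.single g (1:ℤ) - 1)
      = Additive.ofMul (Abelianization.of (rhow d g)) := by
    rw [map_sub, MonoidAlgebra.one_def, gam_single, gam_single, one_smul, one_smul,
      rhow_one, map_one, ofMul_one, sub_zero]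
  have hz : Additive.ofMul (Abelianization.of (rhow d g)) = 0 := by
    rw [← hR, ← hfund]
    exact hL
  have hone : Abelianization.of (rhow d g) = 1 := by
    have h5 := congrArg Additive.toMul hz
    simpa using h5
  have hcomm : rhow d g ∈ commutator ↥(RS d) := (QuotientGroup.eq_one_iff _).mp hone
  have hcoe : ((rhow d g : RS d) : FGrp d) = g := by
    show g * (sigw d (Multiplicative.toAdd (toQ d g)))⁻¹ = g
    rw [hgq, toAdd_one, sigw_zero, inv_one, mul_one]
  have hmem : g ∈ ⁅RS d, RS d⁆ := by
    have h5 : ((RS d).subtype (rhow d g))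
        ∈ Subgroup.map (RS d).subtype (commutator ↥(RS d)) :=
      Subgroup.mem_map_of_mem _ hcomm
    rw [commutator_def, Subgroup.map_commutator] at h5
    simp only [← MonoidHom.range_eq_map, Subgroup.range_subtype] at h5
    have h6 : ((RS d).subtype (rhow d g)) = g := hcoe
    rwa [h6] at h5
  rw [dS2_eq]
  exact hmem

lemma forward_direction {w₁ w₂ : List (Fin d × Bool)}
    (h : (FreeGroup.mk w₁)⁻¹ * FreeGroup.mk w₂ ∈ derivedSeries (FGrp d) 2)
    (v : Pt d) (i : Fin d) :
    crossFrom d 0 w₁ (v, i) = crossFrom d 0 w₂ (v, i) := by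
  rw [dS2_eq] at h
  have hker : mliftQ d ((FreeGroup.mk w₁)⁻¹ * FreeGroup.mk w₂) = 1 :=
    MonoidHom.mem_ker.mp (commRR_le_ker h)
  have hW : mliftQ d (FreeGroup.mk w₂) = mliftQ d (FreeGroup.mk w₁) := by
    have hsplit : FreeGroup.mk w₂
        = FreeGroup.mk w₁ * ((FreeGroup.mk w₁)⁻¹ * FreeGroup.mk w₂) := by group
    rw [hsplit, map_mul, hker, mul_one]
  rw [cross_corr w₁ 0 v i, cross_corr w₂ 0 v i, hW]

end SolProof

/-- Two words in the alphabet `{x₁^{±1}, …, x_d^{±1}}` represent the same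
element of the free metabelian group `Sol_d = F_d/F_d''` if and only if they have the same
signed crossing count at every oriented edge `(v,i)` of the lattice `ℤ^d`. -/
theorem sold_word_eq_iff_crossings_eq (d : ℕ) (w₁ w₂ : List (Fin d × Bool)) :
    (QuotientGroup.mk (FreeGroup.mk w₁) : Sold d) = QuotientGroup.mk (FreeGroup.mk w₂)
      ↔ ∀ (v : Pt d) (i : Fin d), crossFrom d 0 w₁ (v, i) = crossFrom d 0 w₂ (v, i) := by
  constructor
  · intro h v i
    exact SolProof.forward_direction (QuotientGroup.eq.mp h) v i
  · intro hc
    exact QuotientGroup.eq.mpr (SolProof.hard_direction hc)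
end

section
/- Every element of B_d is a finite ℤ-linear combination of translated elementary plackets: for every f ∈ B_d there exist finitely many triples (v, i, j) with v ∈ ℤ^d and 1 ≤ i < j ≤ d and integer coefficients such that f is the corresponding integer combination of elementary (i,j)-plackets at the points v. -/
open scoped BigOperators

namespace PlacketAux

/-- Being a finite `ℤ`-combination of plackets. -/
def IsComb (d : ℕ) (f : Edg d →₀ ℤ) : Prop :=
  ∃ L : List ((Pt d × Fin d × Fin d) × ℤ),
    (∀ x ∈ L, x.1.2.1 < x.1.2.2) ∧
    f = (L.map fun x => x.2 • placket d x.1.1 x.1.2.1 x.1.2.2).sum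

lemma isComb_zero (d : ℕ) : IsComb d 0 := ⟨[], by simp, by simp⟩

lemma isComb_add {d : ℕ} {f g : Edg d →₀ ℤ} (hf : IsComb d f) (hg : IsComb d g) :
    IsComb d (f + g) := by
  obtain ⟨L1, h1, e1⟩ := hf; obtain ⟨L2, h2, e2⟩ := hg
  refine ⟨L1 ++ L2, ?_, ?_⟩
  · intro x hx; rcases List.mem_append.1 hx with h | h
    exacts [h1 x h, h2 x h]
  · rw [e1, e2, List.map_append, List.sum_append]

lemma isComb_neg {d : ℕ} {f : Edg d →₀ ℤ} (hf : IsComb d f) : IsComb d (-f) := by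
  obtain ⟨L, h, e⟩ := hf
  refine ⟨L.map (fun x => (x.1, -x.2)), ?_, ?_⟩
  · intro x hx; obtain ⟨y, hy, rfl⟩ := List.mem_map.1 hx; exact h y hy
  · rw [e]; clear e h
    induction L with
    | nil => simp
    | cons a t ih => simp only [List.map_cons, List.sum_cons, ih, neg_smul, neg_add]

/-- The subgroup of combinations of plackets. -/
noncomputable def P (d : ℕ) : AddSubgroup (Edg d →₀ ℤ) where
  carrier := {f | IsComb d f}
  zero_mem' := isComb_zero d
  add_mem' := isComb_add
  neg_mem' := isComb_neg

lemma placket_mem {d : ℕ} {i j : Fin d} (v : Pt d) (hij : i < j) :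
    placket d v i j ∈ P d :=
  ⟨[((v, i, j), 1)], by simpa using hij, by simp⟩

/-- Signed segment of edges in direction `k` starting at `p`, of (signed) length `n`. -/
noncomputable def seg (d : ℕ) (k : Fin d) (p : Pt d) (n : ℤ) : Edg d →₀ ℤ :=
  (Finset.range n.toNat).sum (fun t => Finsupp.single (p + (t : ℤ) • latE d k, k) 1)
  - (Finset.range (-n).toNat).sum
      (fun t => Finsupp.single (p + (-(t + 1) : ℤ) • latE d k, k) 1)

lemma seg_zero (d : ℕ) (k : Fin d) (p : Pt d) : seg d k p 0 = 0 := by simp [seg]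

lemma seg_succ (d : ℕ) (k : Fin d) (p : Pt d) (n : ℤ) :
    seg d k p (n + 1) = seg d k p n + Finsupp.single (p + n • latE d k, k) 1 := by
  rcases le_or_gt 0 n with h | h
  · have h1 : (n + 1).toNat = n.toNat + 1 := by omega
    have h2 : (-(n + 1)).toNat = 0 := by omega
    have h3 : (-n).toNat = 0 := by omega
    have h4 : ((n.toNat : ℤ)) = n := Int.toNat_of_nonneg h
    rw [seg, seg, h1, h2, h3, Finset.sum_range_succ, h4]
    simp only [Finset.range_zero, Finset.sum_empty, sub_zero]
  · have h1 : (n + 1).toNat = 0 := by omega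
    have h3 : (-n).toNat = (-(n + 1)).toNat + 1 := by omega
    have h4 : ((-((-(n+1)).toNat + 1) : ℤ)) = n := by omega
    rw [seg, seg, h1, h3, Finset.sum_range_succ]
    have h5 : n.toNat = 0 := by omega
    rw [h5]
    rw [h4]
    abel

lemma crossing {d : ℕ} (i k : Fin d) (hik : i < k) (p : Pt d) (n : ℤ) :
    Finsupp.single ((p, i) : Edg d) 1 + seg d k (p + latE d i) n - seg d k p n
      - Finsupp.single ((p + n • latE d k, i) : Edg d) 1 ∈ P d := by
  induction n using Int.induction_on with
  | zero => simp only [seg_zero, add_zero, sub_zero, zero_smul, sub_self]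
            exact zero_mem _
  | succ n ih =>
    have key : Finsupp.single ((p, i) : Edg d) 1 + seg d k (p + latE d i) ((n : ℤ) + 1)
        - seg d k p ((n : ℤ) + 1)
        - Finsupp.single ((p + ((n : ℤ) + 1) • latE d k, i) : Edg d) 1
        = (Finsupp.single ((p, i) : Edg d) 1 + seg d k (p + latE d i) (n : ℤ)
            - seg d k p (n : ℤ)
            - Finsupp.single ((p + (n : ℤ) • latE d k, i) : Edg d) 1)
          + placket d (p + (n : ℤ) • latE d k) i k := by
      rw [seg_succ, seg_succ, placket]
      have e1 : p + latE d i + (n : ℤ) • latE d k = p + (n : ℤ) • latE d k + latE d i := by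
        ring
      have e2 : p + ((n : ℤ) + 1) • latE d k = p + (n : ℤ) • latE d k + latE d k := by
        rw [add_smul, one_smul]; ring
      rw [e1, e2]
      abel
    rw [key]
    exact add_mem ih (placket_mem _ hik)
  | pred n ih =>
    have key : Finsupp.single ((p, i) : Edg d) 1 + seg d k (p + latE d i) (-(n : ℤ) - 1)
        - seg d k p (-(n : ℤ) - 1)
        - Finsupp.single ((p + (-(n : ℤ) - 1) • latE d k, i) : Edg d) 1
        = (Finsupp.single ((p, i) : Edg d) 1 + seg d k (p + latE d i) (-(n : ℤ))
            - seg d k p (-(n : ℤ))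
            - Finsupp.single ((p + (-(n : ℤ)) • latE d k, i) : Edg d) 1)
          - placket d (p + (-(n : ℤ) - 1) • latE d k) i k := by
      have s1 : seg d k (p + latE d i) (-(n : ℤ))
          = seg d k (p + latE d i) (-(n : ℤ) - 1)
            + Finsupp.single ((p + latE d i + (-(n : ℤ) - 1) • latE d k, k) : Edg d) 1 := by
        have := seg_succ d k (p + latE d i) (-(n : ℤ) - 1)
        rwa [show (-(n : ℤ) - 1) + 1 = -(n : ℤ) by ring] at this
      have s2 : seg d k p (-(n : ℤ))
          = seg d k p (-(n : ℤ) - 1)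
            + Finsupp.single ((p + (-(n : ℤ) - 1) • latE d k, k) : Edg d) 1 := by
        have := seg_succ d k p (-(n : ℤ) - 1)
        rwa [show (-(n : ℤ) - 1) + 1 = -(n : ℤ) by ring] at this
      rw [s1, s2, placket]
      have e1 : p + latE d i + (-(n : ℤ) - 1) • latE d k
          = p + (-(n : ℤ) - 1) • latE d k + latE d i := by ring
      have e2 : p + (-(n : ℤ)) • latE d k = p + (-(n : ℤ) - 1) • latE d k + latE d k := by
        rw [show (-(n : ℤ)) = (-(n : ℤ) - 1) + 1 by ring, add_smul, one_smul]; ring_nf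
      rw [e1, e2]
      abel
    rw [key]
    exact sub_mem ih (placket_mem _ hik)

/-- Truncation of a point to its first `m` coordinates. -/
def projN (d : ℕ) (m : ℕ) (v : Pt d) : Pt d := fun j => if (j : ℕ) < m then v j else 0

lemma projN_self (d : ℕ) (v : Pt d) : projN d d v = v :=
  funext fun j => if_pos j.2

lemma projN_succ (d : ℕ) (m : ℕ) (hm : m < d) (v : Pt d) :
    projN d (m + 1) v = projN d m v + v ⟨m, hm⟩ • latE d ⟨m, hm⟩ := by
  funext j
  simp only [projN, Pi.add_apply, Pi.smul_apply, latE, smul_eq_mul]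
  rcases lt_trichotomy (j : ℕ) m with h | h | h
  · rw [if_pos (by omega), if_pos h, if_neg (by intro he; rw [he] at h; simp at h)]
    ring
  · have hj : j = ⟨m, hm⟩ := Fin.ext h
    rw [if_pos (by omega), if_neg (by omega), if_pos hj, hj]
    ring
  · rw [if_neg (by omega), if_neg (by omega),
      if_neg (by intro he; rw [he] at h; simp at h)]
    ring

lemma projN_shift_lt (d : ℕ) (m : ℕ) (i : Fin d) (h : (i : ℕ) < m) (v : Pt d) :
    projN d m (v + latE d i) = projN d m v + latE d i := by
  funext j
  simp only [projN, Pi.add_apply, latE]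
  rcases lt_or_ge (j : ℕ) m with hj | hj
  · rw [if_pos hj, if_pos hj]
  · rw [if_neg (by omega), if_neg (by omega),
      if_neg (by intro he; rw [he] at hj; omega)]
    ring

lemma projN_shift_ge (d : ℕ) (m : ℕ) (i : Fin d) (h : m ≤ (i : ℕ)) (v : Pt d) :
    projN d m (v + latE d i) = projN d m v := by
  funext j
  simp only [projN, Pi.add_apply, latE]
  rcases lt_or_ge (j : ℕ) m with hj | hj
  · rw [if_pos hj, if_pos hj, if_neg (by intro he; rw [he] at hj; omega)]
    ring
  · rw [if_neg (by omega), if_neg (by omega)]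

/-- Canonical staircase chain from `0` to `v`, using the first `m` coordinates. -/
noncomputable def cN (d : ℕ) : ℕ → Pt d → (Edg d →₀ ℤ)
  | 0, _ => 0
  | (m + 1), v =>
      cN d m v + if h : m < d then seg d ⟨m, h⟩ (projN d m v) (v ⟨m, h⟩) else 0

lemma latE_apply_ne (d : ℕ) (i j : Fin d) (h : j ≠ i) : latE d i j = 0 := by
  simp [latE, h]

lemma cN_shift_eq (d : ℕ) (i : Fin d) (m : ℕ) (hm : m ≤ (i : ℕ)) (v : Pt d) :
    cN d m (v + latE d i) = cN d m v := by
  induction m with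
  | zero => rfl
  | succ m ih =>
    have hmi : m < (i : ℕ) := by omega
    rw [cN, cN, ih (by omega)]
    congr 1
    rcases Nat.lt_or_ge m d with h | h
    · rw [dif_pos h, dif_pos h, projN_shift_ge d m i (by omega)]
      congr 1
      show v ⟨m, h⟩ + latE d i ⟨m, h⟩ = v ⟨m, h⟩
      rw [latE_apply_ne d i ⟨m, h⟩
        (by intro he; have := congrArg Fin.val he; simp at this; omega)]
      ring
    · rw [dif_neg (by omega), dif_neg (by omega)]

lemma key_lemma (d : ℕ) (i : Fin d) (v : Pt d) :
    ∀ m : ℕ, (i : ℕ) < m → m ≤ d →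
    cN d m (v + latE d i) - cN d m v
      - Finsupp.single ((projN d m v, i) : Edg d) 1 ∈ P d := by
  intro m
  induction m with
  | zero => omega
  | succ m ih =>
    intro him hmd
    have hm : m < d := by omega
    rcases Nat.lt_or_ge (i : ℕ) m with hi | hi
    -- inductive step: i < m
    · set k : Fin d := ⟨m, hm⟩ with hk
      have hik : i < k := hi
      have hkne : k ≠ i := by intro he; rw [he] at hik; exact lt_irrefl _ hik
      have hvk : (v + latE d i) k = v k := by
        show v k + latE d i k = v k
        rw [latE_apply_ne d i k hkne]; ring
      have key : cN d (m + 1) (v + latE d i) - cN d (m + 1) v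
          - Finsupp.single ((projN d (m + 1) v, i) : Edg d) 1
          = (cN d m (v + latE d i) - cN d m v
              - Finsupp.single ((projN d m v, i) : Edg d) 1)
            + (Finsupp.single ((projN d m v, i) : Edg d) 1
                + seg d k (projN d m v + latE d i) (v k)
                - seg d k (projN d m v) (v k)
                - Finsupp.single ((projN d m v + (v k) • latE d k, i) : Edg d) 1) := by
        rw [cN, cN, dif_pos hm, dif_pos hm,
          projN_shift_lt d m i hi, hvk, projN_succ d m hm v]
        abel
      rw [key]
      exact add_mem (ih hi (by omega)) (crossing i k hik _ _)
    -- base case: i = m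
    · have him' : (i : ℕ) = m := by omega
      have hki : (⟨m, hm⟩ : Fin d) = i := Fin.ext him'.symm
      have key : cN d (m + 1) (v + latE d i) - cN d (m + 1) v
          - Finsupp.single ((projN d (m + 1) v, i) : Edg d) 1 = 0 := by
        rw [cN, cN, dif_pos hm, dif_pos hm, hki,
          cN_shift_eq d i m (by omega), projN_shift_ge d m i (by omega),
          projN_succ d m hm v, hki]
        have hvi : (v + latE d i) i = v i + 1 := by
          show v i + latE d i i = v i + 1
          simp [latE]
        rw [hvi, seg_succ]
        abel
      rw [key]
      exact zero_mem (P d)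

/-- The canonical chain from `0` to `v`. -/
noncomputable def cc (d : ℕ) (v : Pt d) : Edg d →₀ ℤ := cN d d v

lemma single_sub_mem (d : ℕ) (e : Edg d) :
    Finsupp.single e 1 - (cc d (e.1 + latE d e.2) - cc d e.1) ∈ P d := by
  obtain ⟨v, j⟩ := e
  show Finsupp.single ((v, j) : Edg d) 1 - (cc d (v + latE d j) - cc d v) ∈ P d
  have h := key_lemma d j v d j.2 le_rfl
  rw [projN_self] at h
  have h2 := neg_mem h
  have h3 : -(cN d d (v + latE d j) - cN d d v - Finsupp.single ((v, j) : Edg d) 1)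
      = Finsupp.single ((v, j) : Edg d) 1 - (cc d (v + latE d j) - cc d v) := by
    rw [cc, cc]; abel
  rwa [h3] at h2

end PlacketAux

/-- Every `1`-cycle on the grid is a finite `ℤ`-linear combination of
translated elementary plackets: for every `f ∈ B_d` there are finitely many triples
`(v, i, j)` with `i < j` and integer coefficients whose combination of elementary
`(i,j)`-plackets at the points `v` equals `f`. -/
theorem cycles_generated_by_plackets (d : ℕ) (f : Edg d →₀ ℤ) (hf : f ∈ Bgrp d) :
    ∃ L : List ((Pt d × Fin d × Fin d) × ℤ),
      (∀ x ∈ L, x.1.2.1 < x.1.2.2) ∧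
      f = (L.map fun x => x.2 • placket d x.1.1 x.1.2.1 x.1.2.2).sum := by
  classical
  have hcyc : IsCycle d f := hf
  set δ : Edg d → (Edg d →₀ ℤ) :=
    fun e => PlacketAux.cc d (e.1 + latE d e.2) - PlacketAux.cc d e.1 with hδ
  -- Claim 1 : f minus the chain combination lies in P d
  have hf1 : f.support.sum (fun e => f e • (Finsupp.single e 1 : Edg d →₀ ℤ)) = f := by
    conv_rhs => rw [← Finsupp.sum_single f]
    rw [Finsupp.sum]
    refine Finset.sum_congr rfl fun e _ => ?_
    rw [Finsupp.smul_single, smul_eq_mul, mul_one]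
  have claim1 : f - f.support.sum (fun e => f e • δ e) ∈ PlacketAux.P d := by
    have hsplit : f - f.support.sum (fun e => f e • δ e)
        = f.support.sum (fun e => f e • (Finsupp.single e 1 : Edg d →₀ ℤ) - f e • δ e) := by
      rw [Finset.sum_sub_distrib, hf1]
    rw [hsplit]
    refine sum_mem fun e he => ?_
    rw [← smul_sub]
    exact zsmul_mem (PlacketAux.single_sub_mem d e) _
  -- Claim 2 : the chain combination vanishes since f is a cycle
  set A : Pt d →₀ ℤ :=
    f.support.sum (fun e => Finsupp.single (e.1 + latE d e.2) (f e)
      - Finsupp.single e.1 (f e)) with hA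
  have hAzero : A = 0 := by
    ext u
    rw [hA, Finsupp.finset_sum_apply]
    have hterm : ∀ e : Edg d,
        (Finsupp.single (e.1 + latE d e.2) (f e) - Finsupp.single e.1 (f e)) u
        = (if e.1 + latE d e.2 = u then f e else 0) - (if e.1 = u then f e else 0) := by
      intro e
      rw [Finsupp.sub_apply, Finsupp.single_apply, Finsupp.single_apply]
    rw [Finset.sum_congr rfl fun e _ => hterm e, Finset.sum_sub_distrib]
    have hgen : ∀ g : Fin d → Edg d, Function.Injective g →
        (∀ e : Edg d, (e ∈ Finset.univ.image g) ↔ e = g e.2) →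
        (∑ e ∈ f.support, (if e = g e.2 then f e else 0)) = ∑ i : Fin d, f (g i) := by
      intro g hginj hchar
      have h1 : (∑ e ∈ f.support, (if e = g e.2 then f e else 0))
          = ∑ e ∈ f.support, (if e ∈ Finset.univ.image g then f e else 0) := by
        refine Finset.sum_congr rfl fun e _ => ?_
        by_cases h : e = g e.2
        · rw [if_pos h, if_pos ((hchar e).2 h)]
        · rw [if_neg h, if_neg (fun hm => h ((hchar e).1 hm))]
      rw [h1, Finset.sum_ite_mem]
      rw [Finset.sum_subset (Finset.inter_subset_right)
        (fun x _ hx => by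
          rw [Finsupp.notMem_support_iff.1 ?_]
          intro hs
          exact hx (Finset.mem_inter.2 ⟨hs, by
            obtain ⟨i, _, rfl⟩ := Finset.mem_image.1 ‹x ∈ Finset.univ.image g›
            exact Finset.mem_image.2 ⟨i, Finset.mem_univ i, rfl⟩⟩))]
      rw [Finset.sum_image (fun a _ b _ hab => hginj hab)]
    have hs1 : (∑ e ∈ f.support, (if e.1 + latE d e.2 = u then f e else 0))
        = ∑ i : Fin d, f (u - latE d i, i) := by
      have := hgen (fun i => (u - latE d i, i))
        (fun a b hab => by simpa using congrArg Prod.snd hab)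
        (fun e => by
          constructor
          · intro hm
            obtain ⟨i, _, hi⟩ := Finset.mem_image.1 hm
            rw [← hi]
          · intro h; exact Finset.mem_image.2 ⟨e.2, Finset.mem_univ _, h.symm⟩)
      rw [← this]
      refine Finset.sum_congr rfl fun e _ => ?_
      by_cases h : e.1 + latE d e.2 = u
      · rw [if_pos h, if_pos (show e = (u - latE d e.2, e.2) from
          Prod.ext (by rw [← h]; ring) rfl)]
      · rw [if_neg h, if_neg (fun hh : e = (u - latE d e.2, e.2) => h (by
          have h1 : e.1 = u - latE d e.2 := congrArg Prod.fst hh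
          rw [h1]; ring))]
    have hs2 : (∑ e ∈ f.support, (if e.1 = u then f e else 0))
        = ∑ i : Fin d, f (u, i) := by
      have := hgen (fun i => (u, i))
        (fun a b hab => by simpa using congrArg Prod.snd hab)
        (fun e => by
          constructor
          · intro hm
            obtain ⟨i, _, hi⟩ := Finset.mem_image.1 hm
            rw [← hi]
          · intro h; exact Finset.mem_image.2 ⟨e.2, Finset.mem_univ _, h.symm⟩)
      rw [← this]
      refine Finset.sum_congr rfl fun e _ => ?_
      by_cases h : e.1 = u
      · rw [if_pos h, if_pos (show e = (u, e.2) from Prod.ext h rfl)]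
      · rw [if_neg h, if_neg (fun hh : e = (u, e.2) => h (congrArg Prod.fst hh))]
    rw [hs1, hs2, Finsupp.coe_zero, Pi.zero_apply]
    have := hcyc u
    have hsplit : ∑ i : Fin d, (f (u, i) - f (u - latE d i, i))
        = (∑ i : Fin d, f (u, i)) - ∑ i : Fin d, f (u - latE d i, i) := by
      rw [Finset.sum_sub_distrib]
    rw [hsplit] at this
    omega
  have claim2 : f.support.sum (fun e => f e • δ e) = 0 := by
    have hL : f.support.sum (fun e => f e • δ e)
        = Finsupp.linearCombination ℤ (PlacketAux.cc d) A := by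
      rw [hA, map_sum]
      refine Finset.sum_congr rfl fun e _ => ?_
      rw [map_sub, Finsupp.linearCombination_single, Finsupp.linearCombination_single, hδ,
        smul_sub]
    rw [hL, hAzero, map_zero]
  rw [claim2, sub_zero] at claim1
  exact claim1
end

section
/- For d = 2, the abelian group F₂'/F₂'' is free abelian with basis the classes of the elements x₁^k x₂^l [x₁,x₂] x₂^{−l} x₁^{−k} for (k,l) ∈ ℤ²: these classes generate F₂'/F₂'', and they are linearly independent over ℤ (no nontrivial finite integer combination of them is trivial in F₂'/F₂''). -/
open scoped commutatorElement

instance : (derivedSeries (FreeGroup (Fin 2)) 2).Normal :=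
  derivedSeries_normal _ _

/-- The element `x₁^k x₂^l [x₁,x₂] x₂^{-l} x₁^{-k}` of the free group `F₂`. -/
def conjComm (p : ℤ × ℤ) : FreeGroup (Fin 2) :=
  (FreeGroup.of 0) ^ p.1 * (FreeGroup.of 1) ^ p.2
    * ⁅FreeGroup.of (0 : Fin 2), FreeGroup.of (1 : Fin 2)⁆
    * (FreeGroup.of 1) ^ (-p.2) * (FreeGroup.of 0) ^ (-p.1)



namespace CMSD

abbrev R : Type := MonoidAlgebra ℤ (Multiplicative (ℤ × ℤ))

/-- The affine group over `R`: pairs `(t, a)` acting as `x ↦ t x + a`. -/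
@[ext] structure G where
  t : Rˣ
  a : R

noncomputable instance : Group G where
  one := ⟨1, 0⟩
  mul x y := ⟨x.t * y.t, (x.t : R) * y.a + x.a⟩
  inv x := ⟨x.t⁻¹, -((x.t⁻¹ : Rˣ) : R) * x.a⟩
  mul_assoc x y z := by
    ext : 1
    · exact mul_assoc _ _ _
    · show ((x.t * y.t : Rˣ) : R) * z.a + ((x.t : R) * y.a + x.a)
        = (x.t : R) * ((y.t : R) * z.a + y.a) + x.a
      push_cast
      ring
  one_mul x := by
    ext : 1
    · exact one_mul _
    · show ((1 : Rˣ) : R) * x.a + 0 = x.a; simp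
  mul_one x := by
    ext : 1
    · exact mul_one _
    · show (x.t : R) * 0 + x.a = x.a; simp
  inv_mul_cancel x := by
    ext : 1
    · exact inv_mul_cancel _
    · show ((x.t⁻¹ : Rˣ) : R) * x.a + (-((x.t⁻¹ : Rˣ) : R) * x.a) = 0
      ring

@[simp] lemma mul_t (x y : G) : (x * y).t = x.t * y.t := rfl
@[simp] lemma mul_a (x y : G) : (x * y).a = (x.t : R) * y.a + x.a := rfl
@[simp] lemma one_t : (1 : G).t = 1 := rfl
@[simp] lemma one_a : (1 : G).a = 0 := rfl
@[simp] lemma inv_t (x : G) : (x⁻¹).t = x.t⁻¹ := rfl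
@[simp] lemma inv_a (x : G) : (x⁻¹).a = -((x.t⁻¹ : Rˣ) : R) * x.a := rfl

/-- Projection onto the unit part. -/
noncomputable def π : G →* Rˣ where
  toFun x := x.t
  map_one' := rfl
  map_mul' _ _ := rfl

@[simp] lemma π_apply (x : G) : π x = x.t := rfl

/-- The translation part as a homomorphism from `Multiplicative R`. -/
noncomputable def κ : Multiplicative R →* G where
  toFun r := ⟨1, r.toAdd⟩
  map_one' := rfl
  map_mul' r s := by ext : 1 <;> simp [toAdd_mul, add_comm]

@[simp] lemma κ_t (r : Multiplicative R) : (κ r).t = 1 := rfl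
@[simp] lemma κ_a (r : Multiplicative R) : (κ r).a = r.toAdd := rfl

lemma conj_κ (g : G) (r : Multiplicative R) :
    g * κ r * g⁻¹ = κ (Multiplicative.ofAdd ((g.t : R) * r.toAdd)) := by
  ext : 1 <;> simp


/-- Monomials as units of `R`. -/
noncomputable def U : Multiplicative (ℤ × ℤ) →* Rˣ :=
  (MonoidAlgebra.of ℤ (Multiplicative (ℤ × ℤ))).toHomUnits

/-- Units embedded in `G`. -/
noncomputable def ι : Rˣ →* G where
  toFun t := ⟨t, 0⟩
  map_one' := rfl
  map_mul' t s := by ext : 1 <;> simp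

@[simp] lemma ι_t (t : Rˣ) : (ι t).t = t := rfl
@[simp] lemma ι_a (t : Rˣ) : (ι t).a = 0 := rfl

noncomputable abbrev e₁ : Multiplicative (ℤ × ℤ) := Multiplicative.ofAdd (1, 0)
noncomputable abbrev e₂ : Multiplicative (ℤ × ℤ) := Multiplicative.ofAdd (0, 1)

noncomputable def gx : G := ι (U e₁)
noncomputable def gy : G := ⟨U e₂, 1⟩

/-- The Magnus-type homomorphism `F₂ → G`. -/
noncomputable def ψ : FreeGroup (Fin 2) →* G :=
  FreeGroup.lift (fun i => if i = 0 then gx else gy)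

@[simp] lemma ψ_x : ψ (FreeGroup.of 0) = gx := by simp [ψ]
@[simp] lemma ψ_y : ψ (FreeGroup.of 1) = gy := by simp [ψ]

lemma comm_gx_gy : ⁅gx, gy⁆ = κ (Multiplicative.ofAdd (((U e₁ : Rˣ) : R) - 1)) := by
  ext : 1
  · show π ⁅gx, gy⁆ = 1
    rw [map_commutatorElement]
    exact commutatorElement_eq_one_iff_mul_comm.mpr (mul_comm (π gx) (π gy))
  · simp only [commutatorElement_def, mul_a, inv_a, mul_t, inv_t, κ_a, toAdd_ofAdd]
    simp only [gx, gy, ι_t, ι_a, mul_inv_rev, Units.val_mul]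
    ring_nf
    have h : ((U e₁ : Rˣ) : R) * ((U e₂ : Rˣ) : R) * (((U e₁)⁻¹ : Rˣ) : R) * (((U e₂)⁻¹ : Rˣ) : R) = 1 := by
      norm_cast
      rw [mul_comm (U e₁) (U e₂)]
      simp [mul_assoc]
    rw [h]
    ring

lemma ofAdd_pair (p : ℤ × ℤ) : e₁ ^ p.1 * e₂ ^ p.2 = Multiplicative.ofAdd p := by
  rw [← ofAdd_zsmul, ← ofAdd_zsmul, ← ofAdd_add]
  congr 1
  simp [Prod.ext_iff]

lemma t_conj (p : ℤ × ℤ) :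
    (ψ (FreeGroup.of 0 ^ p.1 * FreeGroup.of 1 ^ p.2)).t = U (Multiplicative.ofAdd p) := by
  have h : π (ψ (FreeGroup.of 0 ^ p.1 * FreeGroup.of 1 ^ p.2)) = U e₁ ^ p.1 * U e₂ ^ p.2 := by
    simp only [map_mul, map_zpow, ψ_x, ψ_y]
    rfl
  rw [π_apply] at h
  rw [h, ← map_zpow U, ← map_zpow U, ← map_mul, ofAdd_pair]

lemma psi_conjComm (p : ℤ × ℤ) :
    ψ (conjComm p)
      = κ (Multiplicative.ofAdd
          (((U (Multiplicative.ofAdd p) : Rˣ) : R) * (((U e₁ : Rˣ) : R) - 1))) := by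
  have hgrp : conjComm p
      = (FreeGroup.of 0 ^ p.1 * FreeGroup.of 1 ^ p.2)
        * ⁅FreeGroup.of (0 : Fin 2), FreeGroup.of (1 : Fin 2)⁆
        * (FreeGroup.of 0 ^ p.1 * FreeGroup.of 1 ^ p.2)⁻¹ := by
    rw [conjComm]; group
  rw [hgrp, map_mul, map_mul, map_inv, map_commutatorElement, ψ_x, ψ_y, comm_gx_gy,
    conj_κ, toAdd_ofAdd, t_conj]

lemma ker_comm (x y : G) (hx : x.t = 1) (hy : y.t = 1) : x * y = y * x := by
  ext : 1
  · simp [hx, hy]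
  · simp [hx, hy, add_comm]

lemma dG2_eq_bot : derivedSeries G 2 = ⊥ := by
  have h1 : derivedSeries G 1 ≤ π.ker := by
    rw [derivedSeries_one, commutator_def]
    refine Subgroup.commutator_le.mpr fun g _ h _ => ?_
    rw [MonoidHom.mem_ker, map_commutatorElement, commutatorElement_eq_one_iff_mul_comm]
    exact mul_comm _ _
  rw [eq_bot_iff, show derivedSeries G 2 = ⁅derivedSeries G 1, derivedSeries G 1⁆ from rfl]
  refine Subgroup.commutator_le.mpr fun g hg h hh => ?_
  rw [Subgroup.mem_bot, commutatorElement_eq_one_iff_mul_comm]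
  exact ker_comm g h (h1 hg) (h1 hh)

lemma κ_list (l : List R) :
    (l.map fun r => κ (Multiplicative.ofAdd r)).prod = κ (Multiplicative.ofAdd l.sum) := by
  induction l with
  | nil => simp
  | cons x xs ih => simp [ih, ofAdd_add]

lemma κ_inj {r : R} (h : κ (Multiplicative.ofAdd r) = 1) : r = 0 := by
  have := congrArg G.a h
  simpa using this

lemma X_sub_one_ne : (((U e₁ : Rˣ) : R) - 1) ≠ 0 := by
  intro h
  rw [sub_eq_zero] at h
  have h2 : (MonoidAlgebra.single e₁ (1:ℤ) : R).coeff e₁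
      = (MonoidAlgebra.single (1 : Multiplicative (ℤ × ℤ)) (1:ℤ) : R).coeff e₁ := by
    rw [← MonoidAlgebra.one_def, ← h]; rfl
  rw [MonoidAlgebra.coeff_single, MonoidAlgebra.coeff_single, Finsupp.single_apply, Finsupp.single_apply, if_pos rfl, if_neg (by decide)] at h2
  exact one_ne_zero h2

lemma coeff_list (L : List ((ℤ × ℤ) × ℤ)) (p : ℤ × ℤ) :
    ((L.map fun x => (MonoidAlgebra.single (Multiplicative.ofAdd x.1) x.2 : R)).sum).coeff
        (Multiplicative.ofAdd p)
      = ((L.filter fun x => decide (x.1 = p)).map fun x => x.2).sum := by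
  induction L with
  | nil => simp
  | cons x xs ih =>
    rw [List.map_cons, List.sum_cons, MonoidAlgebra.coeff_add, Finsupp.add_apply, ih]
    by_cases h : x.1 = p
    · rw [List.filter_cons_of_pos (by simp [h]), List.map_cons, List.sum_cons,
        MonoidAlgebra.coeff_single, Finsupp.single_apply, if_pos (by rw [h])]
    · rw [List.filter_cons_of_neg (by simp [h]), MonoidAlgebra.coeff_single, Finsupp.single_apply,
        if_neg (fun hc => h (by simpa using Multiplicative.ofAdd.injective hc)), zero_add]

lemma part2 (L : List ((ℤ × ℤ) × ℤ))
    (hL : (L.map fun x =>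
        (QuotientGroup.mk' (derivedSeries (FreeGroup (Fin 2)) 2) (conjComm x.1)) ^ x.2).prod = 1)
    (p : ℤ × ℤ) : ((L.filter fun x => decide (x.1 = p)).map fun x => x.2).sum = 0 := by
  have hW : (L.map fun x => conjComm x.1 ^ x.2).prod ∈ derivedSeries (FreeGroup (Fin 2)) 2 := by
    rw [← QuotientGroup.ker_mk' (derivedSeries (FreeGroup (Fin 2)) 2), MonoidHom.mem_ker,
      map_list_prod, List.map_map]
    simp only [Function.comp_def]
    exact (congrArg List.prod (List.map_congr_left fun x _ => map_zpow _ _ _)).trans hL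
  have hψ : ψ ((L.map fun x => conjComm x.1 ^ x.2).prod) = 1 := by
    have h2 := map_derivedSeries_le_derivedSeries ψ 2 (Subgroup.mem_map_of_mem ψ hW)
    rw [dG2_eq_bot, Subgroup.mem_bot] at h2
    exact h2
  rw [map_list_prod, List.map_map] at hψ
  have hmaps : (L.map (⇑ψ ∘ fun x => conjComm x.1 ^ x.2))
      = (L.map fun x =>
          x.2 • (((U (Multiplicative.ofAdd x.1) : Rˣ) : R) * (((U e₁ : Rˣ) : R) - 1))).map
        fun r => κ (Multiplicative.ofAdd r) := by
    rw [List.map_map]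
    refine List.map_congr_left fun x _ => ?_
    simp only [Function.comp_apply, map_zpow, psi_conjComm]
    rw [ofAdd_zsmul, map_zpow]
  rw [hmaps, κ_list] at hψ
  have hsum := κ_inj hψ
  rw [show (fun x : (ℤ × ℤ) × ℤ =>
        x.2 • (((U (Multiplicative.ofAdd x.1) : Rˣ) : R) * (((U e₁ : Rˣ) : R) - 1)))
      = fun x => (x.2 • ((U (Multiplicative.ofAdd x.1) : Rˣ) : R)) * (((U e₁ : Rˣ) : R) - 1)
      from funext fun x => (smul_mul_assoc _ _ _).symm, List.sum_map_mul_right] at hsum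
  rcases mul_eq_zero.mp hsum with h | h
  · have hrw : (fun x : (ℤ × ℤ) × ℤ => x.2 • ((U (Multiplicative.ofAdd x.1) : Rˣ) : R))
        = fun x => (MonoidAlgebra.single (Multiplicative.ofAdd x.1) x.2 : R) := by
      funext x
      rw [show ((U (Multiplicative.ofAdd x.1) : Rˣ) : R)
          = MonoidAlgebra.single (Multiplicative.ofAdd x.1) (1 : ℤ) from rfl]
      simp [Finsupp.smul_single, smul_eq_mul, mul_one]
    rw [hrw] at h
    have := congrArg (fun f : R => f.coeff (Multiplicative.ofAdd p)) h
    simpa [coeff_list] using this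
  · exact absurd h X_sub_one_ne

abbrev F : Type := FreeGroup (Fin 2)
noncomputable abbrev mkh : F →* (F ⧸ derivedSeries F 2) :=
  QuotientGroup.mk' (derivedSeries F 2)

lemma range_of : Set.range (FreeGroup.of : Fin 2 → F) = {FreeGroup.of 0, FreeGroup.of 1} := by
  ext w
  constructor
  · rintro ⟨i, rfl⟩
    fin_cases i <;> simp
  · rintro (rfl | rfl)
    exacts [⟨0, rfl⟩, ⟨1, rfl⟩]

lemma part1 :
    (derivedSeries F 1).map mkh
      = Subgroup.closure (Set.range fun p : ℤ × ℤ => mkh (conjComm p)) := by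
  set Q := F ⧸ derivedSeries F 2
  set a : Q := mkh (FreeGroup.of 0) with ha
  set b : Q := mkh (FreeGroup.of 1) with hb
  set σ : ℤ × ℤ → Q := fun p => mkh (conjComm p) with hσdef
  set T : Subgroup Q := Subgroup.closure (Set.range σ) with hT
  have hsur : Function.Surjective (mkh : F →* Q) := QuotientGroup.mk'_surjective _
  have hσ : ∀ p : ℤ × ℤ, σ p = a ^ p.1 * b ^ p.2 * ⁅a, b⁆ * b ^ (-p.2) * a ^ (-p.1) := by
    intro p
    simp only [hσdef, conjComm, map_mul, map_zpow, map_commutatorElement, ha, hb]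
  have hQ2 : derivedSeries Q 2 = ⊥ := by
    have h2 : (derivedSeries F 2).map mkh = ⊥ :=
      (Subgroup.map_eq_bot_iff _).mpr (by rw [QuotientGroup.ker_mk'])
    exact le_antisymm (h2 ▸ derivedSeries_le_map_derivedSeries hsur 2) bot_le
  have hd1 : derivedSeries Q 1 = ⁅(⊤ : Subgroup Q), ⊤⁆ := by
    rw [derivedSeries_one, commutator_def]
  have hcomm' : ∀ c u : Q, c ∈ derivedSeries Q 1 → u ∈ derivedSeries Q 1 →
      c * u * c⁻¹ = u := by
    intro c u hc hu
    have h1 : ⁅c, u⁆ = 1 := by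
      have := Subgroup.commutator_mem_commutator hc hu
      rw [show ⁅derivedSeries Q 1, derivedSeries Q 1⁆ = derivedSeries Q 2 from rfl, hQ2,
        Subgroup.mem_bot] at this
      exact this
    rw [commutatorElement_eq_one_iff_mul_comm] at h1
    rw [h1, mul_assoc, mul_inv_cancel, mul_one]
  have hmemσ : ∀ p : ℤ × ℤ, σ p ∈ derivedSeries Q 1 := by
    intro p
    have h1 : ⁅a, b⁆ ∈ derivedSeries Q 1 := by
      rw [hd1]
      exact Subgroup.commutator_mem_commutator (Subgroup.mem_top _) (Subgroup.mem_top _)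
    have h2 : σ p = (a ^ p.1 * b ^ p.2) * ⁅a, b⁆ * (a ^ p.1 * b ^ p.2)⁻¹ := by
      rw [hσ]; group
    rw [h2]
    exact (derivedSeries_normal _ _).conj_mem _ h1 _
  have key1 : ∀ p : ℤ × ℤ, a * σ p * a⁻¹ = σ (p.1 + 1, p.2) := by
    intro p; rw [hσ, hσ]; group
  have key1' : ∀ p : ℤ × ℤ, a⁻¹ * σ p * a = σ (p.1 - 1, p.2) := by
    intro p; rw [hσ, hσ]; group
  have key2 : ∀ p : ℤ × ℤ, b * σ p * b⁻¹ = σ (p.1, p.2 + 1) := by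
    intro p
    have hcmem : b * a ^ p.1 * b⁻¹ * a ^ (-p.1) ∈ derivedSeries Q 1 := by
      have hc2 : b * a ^ p.1 * b⁻¹ * a ^ (-p.1) = ⁅b, a ^ p.1⁆ := by
        rw [commutatorElement_def, zpow_neg]
      rw [hc2, hd1]
      exact Subgroup.commutator_mem_commutator (Subgroup.mem_top _) (Subgroup.mem_top _)
    have key : b * σ p * b⁻¹
        = (b * a ^ p.1 * b⁻¹ * a ^ (-p.1)) * σ (p.1, p.2 + 1)
          * (b * a ^ p.1 * b⁻¹ * a ^ (-p.1))⁻¹ := by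
      rw [hσ, hσ]; group
    rw [key, hcomm' _ _ hcmem (hmemσ _)]
  have key2' : ∀ p : ℤ × ℤ, b⁻¹ * σ p * b = σ (p.1, p.2 - 1) := by
    intro p
    have hcmem : b⁻¹ * a ^ p.1 * b * a ^ (-p.1) ∈ derivedSeries Q 1 := by
      have hc2 : b⁻¹ * a ^ p.1 * b * a ^ (-p.1) = ⁅b⁻¹, a ^ p.1⁆ := by
        rw [commutatorElement_def, zpow_neg, inv_inv]
      rw [hc2, hd1]
      exact Subgroup.commutator_mem_commutator (Subgroup.mem_top _) (Subgroup.mem_top _)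
    have key : b⁻¹ * σ p * b
        = (b⁻¹ * a ^ p.1 * b * a ^ (-p.1)) * σ (p.1, p.2 - 1)
          * (b⁻¹ * a ^ p.1 * b * a ^ (-p.1))⁻¹ := by
      rw [hσ, hσ]; group
    rw [key, hcomm' _ _ hcmem (hmemσ _)]
  have conjT : ∀ g : Q, (∀ p, g * σ p * g⁻¹ ∈ T) → ∀ h ∈ T, g * h * g⁻¹ ∈ T := by
    intro g hg h hh
    induction hh using Subgroup.closure_induction with
    | mem x hx => obtain ⟨p, rfl⟩ := hx; exact hg p
    | one => simpa using one_mem T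
    | mul x y hx hy ihx ihy =>
      have : g * (x * y) * g⁻¹ = (g * x * g⁻¹) * (g * y * g⁻¹) := by group
      rw [this]; exact mul_mem ihx ihy
    | inv x hx ihx =>
      have : g * x⁻¹ * g⁻¹ = (g * x * g⁻¹)⁻¹ := by group
      rw [this]; exact inv_mem ihx
  have hgen : (⊤ : Subgroup Q) = Subgroup.closure {a, b} := by
    rw [← Subgroup.map_top_of_surjective mkh hsur, ← FreeGroup.closure_range_of (Fin 2),
      MonoidHom.map_closure, range_of, Set.image_pair]
  have hTnormal : T.Normal := by
    rw [← Subgroup.normalizer_eq_top_iff, eq_top_iff, hgen]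
    refine (Subgroup.closure_le _).mpr ?_
    rintro g (rfl | rfl)
    · refine Subgroup.mem_normalizer_iff.mpr fun h => ⟨fun hh => ?_, fun hh => ?_⟩
      · exact conjT a (fun p => by rw [key1]; exact Subgroup.subset_closure ⟨_, rfl⟩) h hh
      · have h2 := conjT a⁻¹
          (fun p => by rw [show a⁻¹ * σ p * a⁻¹⁻¹ = a⁻¹ * σ p * a from by group, key1']
                       exact Subgroup.subset_closure ⟨_, rfl⟩) _ hh
        rwa [show a⁻¹ * (a * h * a⁻¹) * a⁻¹⁻¹ = h from by group] at h2
    · refine Subgroup.mem_normalizer_iff.mpr fun h => ⟨fun hh => ?_, fun hh => ?_⟩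
      · exact conjT b (fun p => by rw [key2]; exact Subgroup.subset_closure ⟨_, rfl⟩) h hh
      · have h2 := conjT b⁻¹
          (fun p => by rw [show b⁻¹ * σ p * b⁻¹⁻¹ = b⁻¹ * σ p * b from by group, key2']
                       exact Subgroup.subset_closure ⟨_, rfl⟩) _ hh
        rwa [show b⁻¹ * (b * h * b⁻¹) * b⁻¹⁻¹ = h from by group] at h2
  haveI := hTnormal
  set πT : Q →* (Q ⧸ T) := QuotientGroup.mk' T with hπT
  have hab : ⁅a, b⁆ ∈ T := by
    have h0 : σ (0, 0) ∈ T := Subgroup.subset_closure ⟨(0, 0), rfl⟩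
    rwa [show σ (0, 0) = ⁅a, b⁆ from by rw [hσ]; simp] at h0
  have commPab : πT a * πT b = πT b * πT a := by
    rw [← commutatorElement_eq_one_iff_mul_comm, ← map_commutatorElement,
      ← MonoidHom.mem_ker, hπT, QuotientGroup.ker_mk']
    exact hab
  have hπsur : Function.Surjective (πT : Q → Q ⧸ T) := QuotientGroup.mk'_surjective _
  have hPgen : (⊤ : Subgroup (Q ⧸ T)) = Subgroup.closure {πT a, πT b} := by
    rw [← Subgroup.map_top_of_surjective πT hπsur, hgen, MonoidHom.map_closure, Set.image_pair]
  have hcenter : ∀ x y : Q ⧸ T, x * y = y * x := by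
    have hsub : (⊤ : Subgroup (Q ⧸ T)) ≤ Subgroup.centralizer {πT a, πT b} := by
      rw [hPgen]
      refine (Subgroup.closure_le _).mpr ?_
      rintro g (rfl | rfl) <;>
        refine Subgroup.mem_centralizer_iff.mpr ?_ <;> rintro h (rfl | rfl)
      · rfl
      · exact commPab.symm
      · exact commPab
      · rfl
    have hcen : Subgroup.closure {πT a, πT b} ≤ Subgroup.center (Q ⧸ T) := by
      refine (Subgroup.closure_le _).mpr ?_
      rintro g (rfl | rfl) <;> refine Subgroup.mem_center_iff.mpr fun x => ?_
      · exact (Subgroup.mem_centralizer_iff.mp (hsub (Subgroup.mem_top x)) _ (Or.inl rfl)).symm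
      · exact (Subgroup.mem_centralizer_iff.mp (hsub (Subgroup.mem_top x)) _ (Or.inr rfl)).symm
    intro x y
    exact Subgroup.mem_center_iff.mp (hcen (hPgen ▸ Subgroup.mem_top y)) x
  have hQab : ∀ x y : Q, ⁅x, y⁆ ∈ T := by
    intro x y
    have h1 : πT ⁅x, y⁆ = 1 := by
      rw [map_commutatorElement, commutatorElement_eq_one_iff_mul_comm]
      exact hcenter _ _
    rwa [← QuotientGroup.ker_mk' T, MonoidHom.mem_ker]
  refine le_antisymm ?_ ?_
  · rw [derivedSeries_one, commutator_def, Subgroup.map_commutator,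
      Subgroup.map_top_of_surjective _ hsur]
    exact Subgroup.commutator_le.mpr fun g _ h _ => hQab g h
  · refine (Subgroup.closure_le _).mpr ?_
    rintro _ ⟨p, rfl⟩
    have hC : ⁅FreeGroup.of (0 : Fin 2), FreeGroup.of 1⁆ ∈ derivedSeries F 1 := by
      rw [derivedSeries_one, commutator_def]
      exact Subgroup.commutator_mem_commutator (Subgroup.mem_top _) (Subgroup.mem_top _)
    have hmem : conjComm p ∈ derivedSeries F 1 := by
      rw [show conjComm p
          = (FreeGroup.of 0 ^ p.1 * FreeGroup.of 1 ^ p.2)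
            * ⁅FreeGroup.of (0 : Fin 2), FreeGroup.of 1⁆
            * (FreeGroup.of 0 ^ p.1 * FreeGroup.of 1 ^ p.2)⁻¹ from by rw [conjComm]; group]
      exact (derivedSeries_normal _ _).conj_mem _ hC _
    exact Subgroup.mem_map_of_mem mkh hmem

end CMSD

/-- For `d = 2`, the abelian group `F₂'/F₂''` is free abelian with basis
the classes of `x₁^k x₂^l [x₁,x₂] x₂^{-l} x₁^{-k}`, `(k,l) ∈ ℤ²`: these classes generate
the image of `F₂'` in `F₂/F₂''`, and no nontrivial finite integer combination of them is
trivial in `F₂/F₂''`. -/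
theorem commutant_mod_second_derived_free_abelian :
    ((derivedSeries (FreeGroup (Fin 2)) 1).map
        (QuotientGroup.mk' (derivedSeries (FreeGroup (Fin 2)) 2))
      = Subgroup.closure
        (Set.range fun p : ℤ × ℤ =>
          QuotientGroup.mk' (derivedSeries (FreeGroup (Fin 2)) 2) (conjComm p))) ∧
    (∀ L : List ((ℤ × ℤ) × ℤ),
      (L.map fun x =>
          (QuotientGroup.mk' (derivedSeries (FreeGroup (Fin 2)) 2) (conjComm x.1)) ^ x.2).prod
        = 1 →
      ∀ p : ℤ × ℤ, ((L.filter fun x => decide (x.1 = p)).map fun x => x.2).sum = 0) :=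
  ⟨CMSD.part1, CMSD.part2⟩
end
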